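/- arXiv:2303.10012 — 3 statements merged into one kernel-verified Lean document; each statement's English description precedes it below -/
import Mathlib

section
/- Let ℍ = {w ∈ ℂ : Re w > 0} and C ∈ ℂ a constant. If (c_1 - 2)|w|^2 = 2 (Re w)^2 |C|^2 - 4 (Re w) Re(C w̄) holds for all w ∈ ℍ, where c_1 ∈ ℝ, then C is real, c_1 = 2, and C = 0 or C = 2. -/
open Complex

theorem coeffs_eq_zero_of_forall_quadratic_eq_zero {K : Type*} [Field K] [CharZero K]
    {α β γ : K} (h : ∀ y : K, α + β * y + γ * y ^ 2 = 0) : α = 0 ∧ β = 0 ∧ γ = 0 := by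
  have hβ : (2 : K) * β = 0 := by linear_combination h 1 - h (-1)
  refine ⟨by linear_combination h 0, (mul_eq_zero.1 hβ).resolve_left two_ne_zero, ?_⟩
  linear_combination (h 1 + h (-1)) / 2 - h 0

/-- On the vertical line `w = 1 + y i` the identity becomes a quadratic polynomial identity
in `y`, with coefficients `c₁ - 2 - 2|C|² + 4 Re C`, `4 Im C` and `c₁ - 2`. -/
theorem hyperbolic_identity (c1 : ℝ) (C : ℂ)
    (h : ∀ w : ℂ, 0 < w.re →
      (c1 - 2) * ‖w‖ ^ 2 =
        2 * w.re ^ 2 * ‖C‖ ^ 2 - 4 * w.re * (C * (starRingEnd ℂ) w).re) :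
    C.im = 0 ∧ c1 = 2 ∧ (C = 0 ∨ C = 2) := by
  obtain ⟨hα, hβ, hγ⟩ := coeffs_eq_zero_of_forall_quadratic_eq_zero
    (α := c1 - 2 - 2 * ‖C‖ ^ 2 + 4 * C.re) (β := 4 * C.im) (γ := c1 - 2) fun y => by
      set w : ℂ := 1 + y * I
      have hw_re : w.re = 1 := by simp [w]
      have hw_im : w.im = y := by simp [w]
      have hnorm : ‖w‖ ^ 2 = 1 + y ^ 2 := by
        rw [Complex.sq_norm, normSq_apply, hw_re, hw_im]; ring
      have hCw : (C * (starRingEnd ℂ) w).re = C.re + C.im * y := by simp [hw_re, hw_im]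
      have hy := h w (by rw [hw_re]; exact one_pos)
      rw [hnorm, hCw, hw_re] at hy
      linear_combination hy
  have him : C.im = 0 := by linarith
  have hc1 : c1 = 2 := by linarith
  have hre : C.re * (C.re - 2) = 0 := by
    rw [Complex.sq_norm, normSq_apply, him, hc1] at hα
    linear_combination -hα / 2
  refine ⟨him, hc1, ?_⟩
  rcases mul_eq_zero.1 hre with h0 | h2
  · exact Or.inl (Complex.ext h0 him)
  · exact Or.inr (Complex.ext (by rw [re_ofNat]; linarith) (by rw [im_ofNat, him]))
end

section
/- Let Ψ : M → ℝ be a potential of a Kähler metric ω on a complex manifold M (so that Ψ_{i j̄} = g_{i j̄}) with ‖∂Ψ‖²_ω constant. Then the covariant derivative identity Ψ_{i;j} Ψ^i = −Ψ_j holds, and the gradient vector field V = Ψ^k ∂_k satisfies [V, V̄] = V − V̄; in particular the distribution span{V, V̄} is integrable. -/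
open Complex

/-- Wirtinger derivative ∂/∂w_j on ℂ^m. -/
noncomputable def wd {m : ℕ} (f : (Fin m → ℂ) → ℂ) (j : Fin m) (w : Fin m → ℂ) : ℂ :=
  (1/2) * (fderiv ℝ f w (Pi.single j 1) - Complex.I * fderiv ℝ f w (Pi.single j Complex.I))

/-- Conjugate Wirtinger derivative ∂/∂w̄_j. -/
noncomputable def wdc {m : ℕ} (f : (Fin m → ℂ) → ℂ) (j : Fin m) (w : Fin m → ℂ) : ℂ :=
  (1/2) * (fderiv ℝ f w (Pi.single j 1) + Complex.I * fderiv ℝ f w (Pi.single j Complex.I))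

/-- Metric components g_{i j̄} = Ψ_{i j̄} of the Kähler metric with potential Ψ. -/
noncomputable def gm {m : ℕ} (Ψ : (Fin m → ℂ) → ℝ) (i j : Fin m) (w : Fin m → ℂ) : ℂ :=
  wdc (fun v => wd (fun u => (Ψ u : ℂ)) i v) j w

/-- Ψ_i = ∂_i Ψ. -/
noncomputable def Psil {m : ℕ} (Ψ : (Fin m → ℂ) → ℝ) (i : Fin m) (w : Fin m → ℂ) : ℂ :=
  wd (fun u => (Ψ u : ℂ)) i w

/-- Ψ^i = Ψ_{j̄} g^{i j̄} (indices raised with the inverse metric G, `G w i j` = g^{i j̄}). -/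
noncomputable def Psiu {m : ℕ} (Ψ : (Fin m → ℂ) → ℝ)
    (G : (Fin m → ℂ) → Matrix (Fin m) (Fin m) ℂ) (i : Fin m) (w : Fin m → ℂ) : ℂ :=
  ∑ j, (starRingEnd ℂ) (Psil Ψ j w) * G w i j

/-- Christoffel symbols Γ^k_{ij} = g^{k l̄} ∂_i g_{j l̄} of the Kähler connection. -/
noncomputable def Gam {m : ℕ} (Ψ : (Fin m → ℂ) → ℝ)
    (G : (Fin m → ℂ) → Matrix (Fin m) (Fin m) ℂ) (k i j : Fin m) (w : Fin m → ℂ) : ℂ :=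
  ∑ l, G w k l * wd (fun v => gm Ψ j l v) i w

section WirtingerCalculus

variable {m : ℕ}

lemma fderiv_conj' (f : (Fin m → ℂ) → ℂ) (w v : Fin m → ℂ) :
    fderiv ℝ (fun x => (starRingEnd ℂ) (f x)) w v = (starRingEnd ℂ) (fderiv ℝ f w v) := by
  have : (fun x => (starRingEnd ℂ) (f x)) = (Complex.conjCLE : ℂ → ℂ) ∘ f := rfl
  rw [this, ContinuousLinearEquiv.comp_fderiv]
  rfl

lemma wd_conj (f : (Fin m → ℂ) → ℂ) (j : Fin m) (w : Fin m → ℂ) :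
    wd (fun x => (starRingEnd ℂ) (f x)) j w = (starRingEnd ℂ) (wdc f j w) := by
  simp only [wd, wdc, fderiv_conj', map_mul, map_sub, map_add, map_div₀, map_one, map_ofNat,
    Complex.conj_I]
  ring

lemma wdc_conj (f : (Fin m → ℂ) → ℂ) (j : Fin m) (w : Fin m → ℂ) :
    wdc (fun x => (starRingEnd ℂ) (f x)) j w = (starRingEnd ℂ) (wd f j w) := by
  simp only [wd, wdc, fderiv_conj', map_mul, map_sub, map_add, map_div₀, map_one, map_ofNat,
    Complex.conj_I]
  ring

lemma wd_congr {f g : (Fin m → ℂ) → ℂ} {w : Fin m → ℂ} (h : f =ᶠ[nhds w] g) (j : Fin m) :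
    wd f j w = wd g j w := by
  simp only [wd, h.fderiv_eq]

lemma wdc_congr {f g : (Fin m → ℂ) → ℂ} {w : Fin m → ℂ} (h : f =ᶠ[nhds w] g) (j : Fin m) :
    wdc f j w = wdc g j w := by
  simp only [wdc, h.fderiv_eq]

lemma wd_mul {f g : (Fin m → ℂ) → ℂ} {w : Fin m → ℂ}
    (hf : DifferentiableAt ℝ f w) (hg : DifferentiableAt ℝ g w) (j : Fin m) :
    wd (fun x => f x * g x) j w = wd f j w * g w + f w * wd g j w := by
  simp only [wd]
  rw [fderiv_fun_mul hf hg]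
  simp only [ContinuousLinearMap.add_apply, ContinuousLinearMap.smul_apply, smul_eq_mul]
  ring

lemma wd_sum {ι : Type*} (s : Finset ι) {F : ι → (Fin m → ℂ) → ℂ} {w : Fin m → ℂ}
    (hF : ∀ i ∈ s, DifferentiableAt ℝ (F i) w) (j : Fin m) :
    wd (fun x => ∑ i ∈ s, F i x) j w = ∑ i ∈ s, wd (F i) j w := by
  simp only [wd]
  rw [fderiv_fun_sum hF]
  simp only [ContinuousLinearMap.sum_apply]
  rw [Finset.mul_sum, ← Finset.sum_sub_distrib, Finset.mul_sum]

lemma wd_constOn {Ω : Set (Fin m → ℂ)} (hΩ : IsOpen Ω) {f : (Fin m → ℂ) → ℂ} {c : ℂ}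
    (h : ∀ x ∈ Ω, f x = c) {w : Fin m → ℂ} (hw : w ∈ Ω) (j : Fin m) :
    wd f j w = 0 := by
  have he : f =ᶠ[nhds w] (fun _ => c) := by
    filter_upwards [hΩ.mem_nhds hw] with x hx using h x hx
  rw [wd_congr he]
  simp [wd]

lemma wdc_mul {f g : (Fin m → ℂ) → ℂ} {w : Fin m → ℂ}
    (hf : DifferentiableAt ℝ f w) (hg : DifferentiableAt ℝ g w) (j : Fin m) :
    wdc (fun x => f x * g x) j w = wdc f j w * g w + f w * wdc g j w := by
  simp only [wdc]
  rw [fderiv_fun_mul hf hg]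
  simp only [ContinuousLinearMap.add_apply, ContinuousLinearMap.smul_apply, smul_eq_mul]
  ring

lemma wdc_sum {ι : Type*} (s : Finset ι) {F : ι → (Fin m → ℂ) → ℂ} {w : Fin m → ℂ}
    (hF : ∀ i ∈ s, DifferentiableAt ℝ (F i) w) (j : Fin m) :
    wdc (fun x => ∑ i ∈ s, F i x) j w = ∑ i ∈ s, wdc (F i) j w := by
  simp only [wdc]
  rw [fderiv_fun_sum hF]
  simp only [ContinuousLinearMap.sum_apply]
  rw [Finset.mul_sum, ← Finset.sum_add_distrib, Finset.mul_sum]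

lemma wdc_constOn {Ω : Set (Fin m → ℂ)} (hΩ : IsOpen Ω) {f : (Fin m → ℂ) → ℂ} {c : ℂ}
    (h : ∀ x ∈ Ω, f x = c) {w : Fin m → ℂ} (hw : w ∈ Ω) (j : Fin m) :
    wdc f j w = 0 := by
  have he : f =ᶠ[nhds w] (fun _ => c) := by
    filter_upwards [hΩ.mem_nhds hw] with x hx using h x hx
  rw [wdc_congr he]
  simp [wdc]

lemma contDiffOn_wd {Ω : Set (Fin m → ℂ)} (hΩ : IsOpen Ω) {f : (Fin m → ℂ) → ℂ}
    (hf : ContDiffOn ℝ (⊤ : ℕ∞) f Ω) (j : Fin m) : ContDiffOn ℝ (⊤ : ℕ∞) (wd f j) Ω := by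
  have h1 : ContDiffOn ℝ (⊤ : ℕ∞) (fderiv ℝ f) Ω := hf.fderiv_of_isOpen hΩ (by simp)
  have h2 : ∀ u, ContDiffOn ℝ (⊤ : ℕ∞) (fun w => fderiv ℝ f w u) Ω := fun u =>
    (ContinuousLinearMap.apply ℝ ℂ u).contDiff.comp_contDiffOn h1
  exact contDiffOn_const.mul ((h2 _).sub (contDiffOn_const.mul (h2 _)))

lemma contDiffOn_wdc {Ω : Set (Fin m → ℂ)} (hΩ : IsOpen Ω) {f : (Fin m → ℂ) → ℂ}
    (hf : ContDiffOn ℝ (⊤ : ℕ∞) f Ω) (j : Fin m) : ContDiffOn ℝ (⊤ : ℕ∞) (wdc f j) Ω := by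
  have h1 : ContDiffOn ℝ (⊤ : ℕ∞) (fderiv ℝ f) Ω := hf.fderiv_of_isOpen hΩ (by simp)
  have h2 : ∀ u, ContDiffOn ℝ (⊤ : ℕ∞) (fun w => fderiv ℝ f w u) Ω := fun u =>
    (ContinuousLinearMap.apply ℝ ℂ u).contDiff.comp_contDiffOn h1
  exact contDiffOn_const.mul ((h2 _).add (contDiffOn_const.mul (h2 _)))

lemma fderiv_wd_apply {f : (Fin m → ℂ) → ℂ} {w : Fin m → ℂ} (hf : ContDiffAt ℝ (⊤ : ℕ∞) f w)
    (j : Fin m) (v : Fin m → ℂ) :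
    fderiv ℝ (wd f j) w v = (1/2) * (fderiv ℝ (fderiv ℝ f) w v (Pi.single j 1)
      - Complex.I * fderiv ℝ (fderiv ℝ f) w v (Pi.single j Complex.I)) := by
  have hd : DifferentiableAt ℝ (fderiv ℝ f) w :=
    (hf.fderiv_right (m := 1) (WithTop.coe_le_coe.mpr le_top)).differentiableAt (by simp)
  have hA : ∀ u, HasFDerivAt (fun x => fderiv ℝ f x u)
      ((ContinuousLinearMap.apply ℝ ℂ u).comp (fderiv ℝ (fderiv ℝ f) w)) w := fun u =>
    (ContinuousLinearMap.apply ℝ ℂ u).hasFDerivAt.comp w hd.hasFDerivAt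
  have h : HasFDerivAt (wd f j)
      ((1/2 : ℂ) • (((ContinuousLinearMap.apply ℝ ℂ (Pi.single j 1)).comp
          (fderiv ℝ (fderiv ℝ f) w))
        - Complex.I • ((ContinuousLinearMap.apply ℝ ℂ (Pi.single j Complex.I)).comp
          (fderiv ℝ (fderiv ℝ f) w)))) w :=
    ((hA _).sub ((hA _).const_mul Complex.I)).const_mul (1/2)
  rw [h.fderiv]
  simp only [ContinuousLinearMap.smul_apply, ContinuousLinearMap.sub_apply,
    ContinuousLinearMap.add_apply, ContinuousLinearMap.comp_apply,
    ContinuousLinearMap.apply_apply, smul_eq_mul]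
  try ring

lemma fderiv_wdc_apply {f : (Fin m → ℂ) → ℂ} {w : Fin m → ℂ} (hf : ContDiffAt ℝ (⊤ : ℕ∞) f w)
    (j : Fin m) (v : Fin m → ℂ) :
    fderiv ℝ (wdc f j) w v = (1/2) * (fderiv ℝ (fderiv ℝ f) w v (Pi.single j 1)
      + Complex.I * fderiv ℝ (fderiv ℝ f) w v (Pi.single j Complex.I)) := by
  have hd : DifferentiableAt ℝ (fderiv ℝ f) w :=
    (hf.fderiv_right (m := 1) (WithTop.coe_le_coe.mpr le_top)).differentiableAt (by simp)
  have hA : ∀ u, HasFDerivAt (fun x => fderiv ℝ f x u)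
      ((ContinuousLinearMap.apply ℝ ℂ u).comp (fderiv ℝ (fderiv ℝ f) w)) w := fun u =>
    (ContinuousLinearMap.apply ℝ ℂ u).hasFDerivAt.comp w hd.hasFDerivAt
  have h : HasFDerivAt (wdc f j)
      ((1/2 : ℂ) • (((ContinuousLinearMap.apply ℝ ℂ (Pi.single j 1)).comp
          (fderiv ℝ (fderiv ℝ f) w))
        + Complex.I • ((ContinuousLinearMap.apply ℝ ℂ (Pi.single j Complex.I)).comp
          (fderiv ℝ (fderiv ℝ f) w)))) w :=
    ((hA _).add ((hA _).const_mul Complex.I)).const_mul (1/2)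
  rw [h.fderiv]
  simp only [ContinuousLinearMap.smul_apply, ContinuousLinearMap.sub_apply,
    ContinuousLinearMap.add_apply, ContinuousLinearMap.comp_apply,
    ContinuousLinearMap.apply_apply, smul_eq_mul]
  try ring

lemma wd_wd_comm {f : (Fin m → ℂ) → ℂ} {w : Fin m → ℂ} (hf : ContDiffAt ℝ (⊤ : ℕ∞) f w) (i j : Fin m) :
    wd (wd f i) j w = wd (wd f j) i w := by
  have hs : ∀ u v, fderiv ℝ (fderiv ℝ f) w u v = fderiv ℝ (fderiv ℝ f) w v u :=
    hf.isSymmSndFDerivAt (by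
      rw [minSmoothness_of_isRCLikeNormedField]; exact WithTop.coe_le_coe.mpr le_top)
  show (1/2) * (fderiv ℝ (wd f i) w (Pi.single j 1)
      - Complex.I * fderiv ℝ (wd f i) w (Pi.single j Complex.I)) = _
  rw [fderiv_wd_apply hf i, fderiv_wd_apply hf i]
  show _ = (1/2) * (fderiv ℝ (wd f j) w (Pi.single i 1)
      - Complex.I * fderiv ℝ (wd f j) w (Pi.single i Complex.I))
  rw [fderiv_wd_apply hf j, fderiv_wd_apply hf j]
  rw [hs (Pi.single j 1) (Pi.single i 1), hs (Pi.single j 1) (Pi.single i Complex.I),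
    hs (Pi.single j Complex.I) (Pi.single i 1), hs (Pi.single j Complex.I) (Pi.single i Complex.I)]
  ring

lemma wd_wdc_comm {f : (Fin m → ℂ) → ℂ} {w : Fin m → ℂ} (hf : ContDiffAt ℝ (⊤ : ℕ∞) f w) (i j : Fin m) :
    wd (wdc f i) j w = wdc (wd f j) i w := by
  have hs : ∀ u v, fderiv ℝ (fderiv ℝ f) w u v = fderiv ℝ (fderiv ℝ f) w v u :=
    hf.isSymmSndFDerivAt (by
      rw [minSmoothness_of_isRCLikeNormedField]; exact WithTop.coe_le_coe.mpr le_top)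
  show (1/2) * (fderiv ℝ (wdc f i) w (Pi.single j 1)
      - Complex.I * fderiv ℝ (wdc f i) w (Pi.single j Complex.I)) = _
  rw [fderiv_wdc_apply hf i, fderiv_wdc_apply hf i]
  show _ = (1/2) * (fderiv ℝ (wd f j) w (Pi.single i 1)
      + Complex.I * fderiv ℝ (wd f j) w (Pi.single i Complex.I))
  rw [fderiv_wd_apply hf j, fderiv_wd_apply hf j]
  rw [hs (Pi.single j 1) (Pi.single i 1), hs (Pi.single j 1) (Pi.single i Complex.I),
    hs (Pi.single j Complex.I) (Pi.single i 1), hs (Pi.single j Complex.I) (Pi.single i Complex.I)]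
  ring

end WirtingerCalculus

lemma alg1 {m : ℕ} (a u : Fin m → ℂ) (P Q : Fin m → Fin m → ℂ)
    (Da : Fin m → Fin m → ℂ) (DP DQ : Fin m → Fin m → Fin m → ℂ)
    (Gm : Fin m → Fin m → Fin m → ℂ) (j : Fin m)
    (hu : ∀ i, u i = ∑ l, (starRingEnd ℂ) (a l) * Q i l)
    (hQh : ∀ i l, (starRingEnd ℂ) (Q i l) = Q l i)
    (hPQ3 : ∀ l l', ∑ k, P k l * Q k l' = (if l = l' then 1 else 0))
    (hGam : ∀ k d b, Gm k d b = ∑ l, Q k l * DP b l d)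
    (hDPsymm : ∀ k l d, DP k l d = DP d l k)
    (hD1 : ∑ i, (Da i j * u i
      + a i * (∑ l, ((starRingEnd ℂ) (P l j) * Q i l + (starRingEnd ℂ) (a l) * DQ i l j))) = 0)
    (hD2 : ∀ i k, ∑ l, (DQ i l j * P k l + Q i l * DP k l j) = 0) :
    ∑ i, (Da i j - ∑ k, Gm k i j * a k) * u i = - a j := by
  classical
  have hcu : ∀ l, (starRingEnd ℂ) (u l) = ∑ i, a i * Q i l := by
    intro l
    rw [hu l, map_sum]
    exact Finset.sum_congr rfl fun i _ => by rw [map_mul, RingHomCompTriple.comp_apply,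
      RingHom.id_apply, hQh]
  -- E1 : DQ i l' j = -∑ k, Gm i j k * Q k l'
  have hE1 : ∀ i l', DQ i l' j = -∑ k, Gm i j k * Q k l' := by
    intro i l'
    have h1 : ∀ k, ∑ l, DQ i l j * P k l = - Gm i j k := by
      intro k
      have h := hD2 i k
      rw [Finset.sum_add_distrib] at h
      rw [eq_neg_of_add_eq_zero_left h, hGam]
    calc DQ i l' j = ∑ l, DQ i l j * (if l = l' then 1 else 0) := by
          simp [mul_ite, Finset.sum_ite_eq']
      _ = ∑ l, DQ i l j * (∑ k, P k l * Q k l') := by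
          simp only [hPQ3]
      _ = ∑ k, (∑ l, DQ i l j * P k l) * Q k l' := by
          simp only [Finset.mul_sum, Finset.sum_mul, mul_assoc]
          exact Finset.sum_comm
      _ = -∑ k, Gm i j k * Q k l' := by
          simp only [h1, neg_mul, Finset.sum_neg_distrib]
  rw [Finset.sum_add_distrib] at hD1
  have hS1 : ∑ i, Da i j * u i
      = - (∑ i, a i * (∑ l, ((starRingEnd ℂ) (P l j) * Q i l
          + (starRingEnd ℂ) (a l) * DQ i l j))) := eq_neg_of_add_eq_zero_left hD1
  have hA : ∑ i, a i * (∑ l, (starRingEnd ℂ) (P l j) * Q i l) = a j := by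
    have h1 : ∑ l, P l j * u l = (starRingEnd ℂ) (a j) := by
      calc ∑ l, P l j * u l = ∑ l, P l j * ∑ k, (starRingEnd ℂ) (a k) * Q l k := by
            simp only [hu]
        _ = ∑ k, (starRingEnd ℂ) (a k) * ∑ l, P l j * Q l k := by
            simp only [Finset.mul_sum, Finset.sum_mul]
            rw [Finset.sum_comm]
            exact Finset.sum_congr rfl fun k _ => Finset.sum_congr rfl fun l _ => by ring
        _ = (starRingEnd ℂ) (a j) := by
            simp [hPQ3]
    calc ∑ i, a i * (∑ l, (starRingEnd ℂ) (P l j) * Q i l)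
        = ∑ l, (starRingEnd ℂ) (P l j) * ∑ i, a i * Q i l := by
          simp only [Finset.mul_sum, Finset.sum_mul]
          rw [Finset.sum_comm]
          exact Finset.sum_congr rfl fun k _ => Finset.sum_congr rfl fun l _ => by ring
      _ = ∑ l, (starRingEnd ℂ) (P l j) * (starRingEnd ℂ) (u l) := by
          simp only [hcu]
      _ = (starRingEnd ℂ) (∑ l, P l j * u l) := by
          rw [map_sum]; exact Finset.sum_congr rfl fun l _ => (map_mul _ _ _).symm
      _ = a j := by rw [h1, RingHomCompTriple.comp_apply, RingHom.id_apply]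
  have hB : ∑ i, a i * (∑ l, (starRingEnd ℂ) (a l) * DQ i l j)
      = - ∑ i, ∑ k, Gm i j k * (a i * u k) := by
    calc ∑ i, a i * (∑ l, (starRingEnd ℂ) (a l) * DQ i l j)
        = ∑ i, a i * (∑ l, (starRingEnd ℂ) (a l) * (-∑ k, Gm i j k * Q k l)) := by
          simp only [hE1]
      _ = - ∑ i, ∑ k, Gm i j k * (a i * ∑ l, (starRingEnd ℂ) (a l) * Q k l) := by
          simp only [Finset.mul_sum, mul_neg, Finset.sum_neg_distrib, neg_inj]
          refine Finset.sum_congr rfl fun i _ => ?_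
          rw [Finset.sum_comm]
          exact Finset.sum_congr rfl fun k _ => Finset.sum_congr rfl fun l _ => by ring
      _ = - ∑ i, ∑ k, Gm i j k * (a i * u k) := by
          simp only [← hu]
  rw [show (∑ i, a i * (∑ l, ((starRingEnd ℂ) (P l j) * Q i l + (starRingEnd ℂ) (a l) * DQ i l j)))
      = (∑ i, a i * (∑ l, (starRingEnd ℂ) (P l j) * Q i l))
        + (∑ i, a i * (∑ l, (starRingEnd ℂ) (a l) * DQ i l j)) from by
    simp only [Finset.sum_add_distrib, mul_add], hA, hB] at hS1
  have hT : ∑ i, (∑ k, Gm k i j * a k) * u i = ∑ i, ∑ k, Gm i j k * (a i * u k) := by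
    calc ∑ i, (∑ k, Gm k i j * a k) * u i = ∑ i, ∑ k, Gm k i j * (a k * u i) := by
          simp only [Finset.sum_mul, mul_assoc]
      _ = ∑ k, ∑ i, Gm k i j * (a k * u i) := Finset.sum_comm
      _ = ∑ i, ∑ k, Gm i j k * (a i * u k) := by
          refine Finset.sum_congr rfl fun x _ => Finset.sum_congr rfl fun y _ => ?_
          have : Gm x y j = Gm x j y := by
            rw [hGam, hGam]
            exact Finset.sum_congr rfl fun l _ => by rw [hDPsymm j l y]
          rw [this]
  calc ∑ i, (Da i j - ∑ k, Gm k i j * a k) * u i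
      = ∑ i, Da i j * u i - ∑ i, (∑ k, Gm k i j * a k) * u i := by
        simp only [sub_mul, Finset.sum_sub_distrib]
    _ = - a j := by
        rw [hS1, hT]; ring

lemma alg2 {m : ℕ} (a u : Fin m → ℂ) (P Q : Fin m → Fin m → ℂ)
    (Da : Fin m → Fin m → ℂ) (DP DcQ : Fin m → Fin m → Fin m → ℂ)
    (Gm : Fin m → Fin m → Fin m → ℂ) (j : Fin m)
    (hu : ∀ i, u i = ∑ l, (starRingEnd ℂ) (a l) * Q i l)
    (hQh : ∀ i l, (starRingEnd ℂ) (Q i l) = Q l i)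
    (hQP4 : ∀ l l', ∑ k, Q k l * P k l' = (if l = l' then 1 else 0))
    (hGam : ∀ k d b, Gm k d b = ∑ l, Q k l * DP b l d)
    (hDasymm : ∀ i d, Da i d = Da d i)
    (hg1 : ∀ l, ∑ k, (Da k l - ∑ i, Gm i k l * a i) * u k = - a l)
    (hD3 : ∀ i k, ∑ l, ((starRingEnd ℂ) (DP l i k) * Q j l + P i l * DcQ j l k) = 0) :
    ∑ k, (starRingEnd ℂ) (u k)
      * (∑ l, ((starRingEnd ℂ) (Da l k) * Q j l + (starRingEnd ℂ) (a l) * DcQ j l k))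
      = - u j := by
  classical
  have hcu : ∀ l, (starRingEnd ℂ) (u l) = ∑ i, a i * Q i l := by
    intro l
    rw [hu l, map_sum]
    exact Finset.sum_congr rfl fun i _ => by rw [map_mul, RingHomCompTriple.comp_apply,
      RingHom.id_apply, hQh]
  set R : Fin m → Fin m → ℂ := fun i k => ∑ b, (starRingEnd ℂ) (DP b i k) * Q j b with hR
  have hE2 : ∀ l' k, DcQ j l' k = -∑ i, Q i l' * R i k := by
    intro l' k
    have h1 : ∀ i, ∑ l, P i l * DcQ j l k = - R i k := by
      intro i
      have h := hD3 i k
      rw [Finset.sum_add_distrib] at h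
      exact eq_neg_of_add_eq_zero_right h
    calc DcQ j l' k = ∑ l, (if l' = l then 1 else 0) * DcQ j l k := by
          simp [Finset.sum_ite_eq]
      _ = ∑ l, (∑ i, Q i l' * P i l) * DcQ j l k := by
          simp only [hQP4]
      _ = ∑ i, Q i l' * (∑ l, P i l * DcQ j l k) := by
          simp only [Finset.mul_sum, Finset.sum_mul]
          rw [Finset.sum_comm]
          exact Finset.sum_congr rfl fun _ _ => Finset.sum_congr rfl fun _ _ => by ring
      _ = -∑ i, Q i l' * R i k := by
          simp only [h1, mul_neg, Finset.sum_neg_distrib]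
  set W : Fin m → ℂ := fun l => ∑ k, ∑ i, Gm i k l * a i * u k with hW
  have hDau : ∀ l, ∑ k, Da l k * u k = - a l + W l := by
    intro l
    have h := hg1 l
    simp only [sub_mul, Finset.sum_sub_distrib, Finset.sum_mul] at h
    have h3 : ∑ k, Da k l * u k = - a l + W l := by
      show ∑ k, Da k l * u k = - a l + ∑ k, ∑ i, Gm i k l * a i * u k
      linear_combination h
    rw [← h3]
    exact Finset.sum_congr rfl fun k _ => by rw [hDasymm l k]
  have hT1 : ∑ k, (starRingEnd ℂ) (u k) * (∑ l, (starRingEnd ℂ) (Da l k) * Q j l)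
      = - u j + ∑ l, Q j l * (starRingEnd ℂ) (W l) := by
    calc ∑ k, (starRingEnd ℂ) (u k) * (∑ l, (starRingEnd ℂ) (Da l k) * Q j l)
        = ∑ l, Q j l * (starRingEnd ℂ) (∑ k, Da l k * u k) := by
          simp only [map_sum, map_mul, Finset.mul_sum, Finset.sum_mul]
          rw [Finset.sum_comm]
          exact Finset.sum_congr rfl fun _ _ => Finset.sum_congr rfl fun _ _ => by ring
      _ = ∑ l, Q j l * ((starRingEnd ℂ) (- a l) + (starRingEnd ℂ) (W l)) := by
          simp only [hDau, map_add]
      _ = - u j + ∑ l, Q j l * (starRingEnd ℂ) (W l) := by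
          rw [hu j]
          simp only [mul_add, Finset.sum_add_distrib, map_neg, mul_neg,
            Finset.sum_neg_distrib]
          have : ∑ x, Q j x * (starRingEnd ℂ) (a x) = ∑ l, (starRingEnd ℂ) (a l) * Q j l :=
            Finset.sum_congr rfl fun l _ => by ring
          rw [this]
  have hinner : ∀ b, ∑ k, (starRingEnd ℂ) (u k) * (∑ i, u i * (starRingEnd ℂ) (DP b i k))
      = (starRingEnd ℂ) (W b) := by
    intro b
    have hWb : W b = ∑ k, ∑ i, Gm i k b * a i * u k := rfl
    rw [hWb, map_sum]
    refine Finset.sum_congr rfl fun k _ => ?_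
    have key : u k * (∑ i, (starRingEnd ℂ) (u i) * DP b i k)
        = ∑ i, Gm i k b * a i * u k := by
      calc u k * (∑ i, (starRingEnd ℂ) (u i) * DP b i k)
          = u k * (∑ i, (∑ l, a l * Q l i) * DP b i k) := by simp only [hcu]
        _ = u k * (∑ l, a l * (∑ i, Q l i * DP b i k)) := by
            congr 1
            simp only [Finset.sum_mul, Finset.mul_sum]
            rw [Finset.sum_comm]
            exact Finset.sum_congr rfl fun _ _ => Finset.sum_congr rfl fun _ _ => by ring
        _ = ∑ i, Gm i k b * a i * u k := by
            simp only [← hGam, Finset.mul_sum]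
            exact Finset.sum_congr rfl fun i _ => by ring
    calc (starRingEnd ℂ) (u k) * (∑ i, u i * (starRingEnd ℂ) (DP b i k))
        = (starRingEnd ℂ) (u k * (∑ i, (starRingEnd ℂ) (u i) * DP b i k)) := by
          rw [map_mul, map_sum]
          congr 1
          exact Finset.sum_congr rfl fun i _ => by
            rw [map_mul, RingHomCompTriple.comp_apply, RingHom.id_apply]
      _ = (starRingEnd ℂ) (∑ i, Gm i k b * a i * u k) := by rw [key]
  have hT2 : ∑ k, (starRingEnd ℂ) (u k) * (∑ l, (starRingEnd ℂ) (a l) * DcQ j l k)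
      = - ∑ b, Q j b * (starRingEnd ℂ) (W b) := by
    calc ∑ k, (starRingEnd ℂ) (u k) * (∑ l, (starRingEnd ℂ) (a l) * DcQ j l k)
        = ∑ k, (starRingEnd ℂ) (u k) * (∑ l, (starRingEnd ℂ) (a l) * (-∑ i, Q i l * R i k)) := by
          simp only [hE2]
      _ = - ∑ k, (starRingEnd ℂ) (u k) * (∑ i, (∑ l, (starRingEnd ℂ) (a l) * Q i l) * R i k) := by
          simp only [mul_neg, Finset.sum_neg_distrib, neg_inj]
          refine Finset.sum_congr rfl fun k _ => ?_
          congr 1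
          simp only [Finset.mul_sum, Finset.sum_mul]
          rw [Finset.sum_comm]
          exact Finset.sum_congr rfl fun _ _ => Finset.sum_congr rfl fun _ _ => by ring
      _ = - ∑ k, (starRingEnd ℂ) (u k) * (∑ i, u i * R i k) := by
          simp only [← hu]
      _ = - ∑ k, ∑ i, ∑ b, (starRingEnd ℂ) (u k) * (u i * ((starRingEnd ℂ) (DP b i k) * Q j b)) := by
          rw [neg_inj]
          refine Finset.sum_congr rfl fun k _ => ?_
          rw [Finset.mul_sum]
          refine Finset.sum_congr rfl fun i _ => ?_
          have hRik : R i k = ∑ b, (starRingEnd ℂ) (DP b i k) * Q j b := rfl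
          rw [hRik, Finset.mul_sum, Finset.mul_sum]
      _ = - ∑ b, ∑ k, ∑ i, (starRingEnd ℂ) (u k) * (u i * ((starRingEnd ℂ) (DP b i k) * Q j b)) := by
          rw [neg_inj]
          calc ∑ k, ∑ i, ∑ b, (starRingEnd ℂ) (u k) * (u i * ((starRingEnd ℂ) (DP b i k) * Q j b))
              = ∑ k, ∑ b, ∑ i, (starRingEnd ℂ) (u k) * (u i * ((starRingEnd ℂ) (DP b i k) * Q j b)) :=
                Finset.sum_congr rfl fun _ _ => Finset.sum_comm
            _ = ∑ b, ∑ k, ∑ i, (starRingEnd ℂ) (u k) * (u i * ((starRingEnd ℂ) (DP b i k) * Q j b)) :=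
                Finset.sum_comm
      _ = - ∑ b, Q j b * (∑ k, (starRingEnd ℂ) (u k) * (∑ i, u i * (starRingEnd ℂ) (DP b i k))) := by
          rw [neg_inj]
          refine Finset.sum_congr rfl fun b _ => ?_
          rw [Finset.mul_sum]
          refine Finset.sum_congr rfl fun k _ => ?_
          rw [Finset.mul_sum, Finset.mul_sum]
          exact Finset.sum_congr rfl fun i _ => by ring
      _ = - ∑ b, Q j b * (starRingEnd ℂ) (W b) := by
          simp only [hinner]
  calc ∑ k, (starRingEnd ℂ) (u k)
      * (∑ l, ((starRingEnd ℂ) (Da l k) * Q j l + (starRingEnd ℂ) (a l) * DcQ j l k))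
      = ∑ k, (starRingEnd ℂ) (u k) * (∑ l, (starRingEnd ℂ) (Da l k) * Q j l)
        + ∑ k, (starRingEnd ℂ) (u k) * (∑ l, (starRingEnd ℂ) (a l) * DcQ j l k) := by
        simp only [Finset.sum_add_distrib, mul_add]
    _ = - u j := by
        rw [hT1, hT2]; ring

/-- for a Kähler potential Ψ with ‖∂Ψ‖²_ω constant, the identity
Ψ_{i;j}Ψ^i = −Ψ_j holds, and the gradient field V = Ψ^k ∂_k satisfies [V,V̄] = V − V̄
(componentwise: V̄(Ψ^j) = −Ψ^j and its conjugate), so span{V,V̄} is integrable. -/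
theorem gradient_field_bracket {m : ℕ} (Ω : Set (Fin m → ℂ)) (hΩ : IsOpen Ω)
    (Ψ : (Fin m → ℂ) → ℝ) (G : (Fin m → ℂ) → Matrix (Fin m) (Fin m) ℂ) (c : ℝ)
    (hΨ : ContDiffOn ℝ (⊤ : ℕ∞) (fun u => (Ψ u : ℂ)) Ω)
    (hGsm : ∀ i j, ContDiffOn ℝ (⊤ : ℕ∞) (fun w => G w i j) Ω)
    (hG : ∀ w ∈ Ω, ∀ i k, ∑ j, gm Ψ i j w * G w k j = if i = k then 1 else 0)
    (hG' : ∀ w ∈ Ω, ∀ i k, ∑ j, G w i j * gm Ψ k j w = if i = k then 1 else 0)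
    (hconst : ∀ w ∈ Ω, ∑ i, Psil Ψ i w * Psiu Ψ G i w = (c : ℂ)) :
    (∀ w ∈ Ω, ∀ j,
      ∑ i, (wd (Psil Ψ i) j w - ∑ k, Gam Ψ G k i j w * Psil Ψ k w) * Psiu Ψ G i w
        = - Psil Ψ j w) ∧
    (∀ w ∈ Ω, ∀ j,
      ∑ k, (starRingEnd ℂ) (Psiu Ψ G k w) * wdc (Psiu Ψ G j) k w = - Psiu Ψ G j w) := by
  classical
  -- smoothness
  have hPsil_smooth : ∀ i, ContDiffOn ℝ (⊤ : ℕ∞) (Psil Ψ i) Ω := fun i => contDiffOn_wd hΩ hΨ i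
  have hgm_smooth : ∀ i l, ContDiffOn ℝ (⊤ : ℕ∞) (gm Ψ i l) Ω := fun i l =>
    contDiffOn_wdc hΩ (hPsil_smooth i) l
  have hconj_smooth : ∀ i, ContDiffOn ℝ (⊤ : ℕ∞) (fun x => (starRingEnd ℂ) (Psil Ψ i x)) Ω := fun i =>
    Complex.conjCLE.contDiff.comp_contDiffOn (hPsil_smooth i)
  have hPsiu_smooth : ∀ i, ContDiffOn ℝ (⊤ : ℕ∞) (Psiu Ψ G i) Ω := fun i =>
    ContDiffOn.sum (fun l _ => (hconj_smooth l).mul (hGsm i l))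
  -- pointwise differentiability / smoothness
  have hda : ∀ {g : (Fin m → ℂ) → ℂ}, ContDiffOn ℝ (⊤ : ℕ∞) g Ω → ∀ {w}, w ∈ Ω →
      DifferentiableAt ℝ g w := by
    intro g hg w hw
    exact (hg.contDiffAt (hΩ.mem_nhds hw)).differentiableAt (by simp)
  have hat : ∀ {g : (Fin m → ℂ) → ℂ}, ContDiffOn ℝ (⊤ : ℕ∞) g Ω → ∀ {w}, w ∈ Ω →
      ContDiffAt ℝ (⊤ : ℕ∞) g w := by
    intro g hg w hw
    exact hg.contDiffAt (hΩ.mem_nhds hw)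
  -- Hermitian symmetry of the metric
  have hherm : ∀ w ∈ Ω, ∀ i l, (starRingEnd ℂ) (gm Ψ i l w) = gm Ψ l i w := by
    intro w hw i l
    have h1 : (fun x => (starRingEnd ℂ) (Psil Ψ i x)) = wdc (fun u => (Ψ u : ℂ)) i := by
      funext x
      rw [show Psil Ψ i x = wd (fun u => (Ψ u : ℂ)) i x from rfl,
        ← wdc_conj (fun u => (Ψ u : ℂ)) i x]
      congr 1
      funext y
      exact (Complex.conj_ofReal _)
    calc (starRingEnd ℂ) (gm Ψ i l w)
        = (starRingEnd ℂ) (wdc (Psil Ψ i) l w) := rfl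
      _ = wd (fun x => (starRingEnd ℂ) (Psil Ψ i x)) l w := (wd_conj (Psil Ψ i) l w).symm
      _ = wd (wdc (fun u => (Ψ u : ℂ)) i) l w := by rw [h1]
      _ = wdc (wd (fun u => (Ψ u : ℂ)) l) i w := wd_wdc_comm (hat hΨ hw) i l
      _ = gm Ψ l i w := rfl
  -- symmetry of second holomorphic derivatives
  have hDa_symm : ∀ w ∈ Ω, ∀ i d, wd (Psil Ψ i) d w = wd (Psil Ψ d) i w := fun w hw i d =>
    wd_wd_comm (hat hΨ hw) i d
  -- symmetry of ∂ of metric in the two unbarred indices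
  have hDP_symm : ∀ w ∈ Ω, ∀ k l d, wd (gm Ψ k l) d w = wd (gm Ψ d l) k w := by
    intro w hw k l d
    have h1 : wd (wdc (Psil Ψ k) l) d w = wdc (wd (Psil Ψ k) d) l w :=
      wd_wdc_comm (hat (hPsil_smooth k) hw) l d
    have h2 : wd (wdc (Psil Ψ d) l) k w = wdc (wd (Psil Ψ d) k) l w :=
      wd_wdc_comm (hat (hPsil_smooth d) hw) l k
    have h3 : wdc (wd (Psil Ψ k) d) l w = wdc (wd (Psil Ψ d) k) l w := by
      apply wdc_congr
      filter_upwards [hΩ.mem_nhds hw] with v hv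
      exact hDa_symm v hv k d
    exact h1.trans (h3.trans h2.symm)
  -- inverse matrix identities
  have hmat : ∀ w ∈ Ω,
      (∀ l l', ∑ k, gm Ψ k l w * G w k l' = (if l = l' then 1 else 0)) ∧
      (∀ l l', ∑ k, G w k l * gm Ψ k l' w = (if l = l' then 1 else 0)) ∧
      (∀ i l, (starRingEnd ℂ) (G w i l) = G w l i) := by
    intro w hw
    set A : Matrix (Fin m) (Fin m) ℂ := Matrix.of fun i j => gm Ψ i j w with hA
    have hAB : A * (G w).transpose = 1 := by
      ext i k
      rw [Matrix.mul_apply]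
      simp only [Matrix.transpose_apply, Matrix.one_apply, hA, Matrix.of_apply]
      exact hG w hw i k
    have hBA : G w * A.transpose = 1 := by
      ext i k
      rw [Matrix.mul_apply]
      simp only [Matrix.transpose_apply, Matrix.one_apply, hA, Matrix.of_apply]
      exact hG' w hw i k
    have h3 : A.transpose * G w = 1 := mul_eq_one_comm.mp hBA
    have h4 : (G w).transpose * A = 1 := mul_eq_one_comm.mp hAB
    refine ⟨?_, ?_, ?_⟩
    · intro l l'
      have h := congrFun (congrFun h3 l) l'
      rw [Matrix.mul_apply] at h
      simpa [Matrix.transpose_apply, Matrix.one_apply, hA, Matrix.of_apply] using h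
    · intro l l'
      have h := congrFun (congrFun h4 l) l'
      rw [Matrix.mul_apply] at h
      simpa [Matrix.transpose_apply, Matrix.one_apply, hA, Matrix.of_apply] using h
    · set C : Matrix (Fin m) (Fin m) ℂ := Matrix.of fun i j => (starRingEnd ℂ) (G w i j) with hC
      have hCA : C * A = 1 := by
        ext i k
        rw [Matrix.mul_apply]
        have hterm : ∀ j, C i j * A j k = (starRingEnd ℂ) (G w i j * gm Ψ k j w) := by
          intro j
          rw [map_mul]
          simp only [hC, hA, Matrix.of_apply]
          congr 1
          rw [← hherm w hw j k, RingHomCompTriple.comp_apply, RingHom.id_apply]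
        simp only [hterm]
        rw [← map_sum, hG' w hw i k]
        by_cases hik : i = k <;> simp [hik, Matrix.one_apply]
      have hCB : C = (G w).transpose := by
        calc C = C * 1 := (mul_one C).symm
          _ = C * (A * (G w).transpose) := by rw [hAB]
          _ = (C * A) * (G w).transpose := by rw [mul_assoc]
          _ = (G w).transpose := by rw [hCA, one_mul]
      intro i l
      have h := congrFun (congrFun hCB i) l
      simpa [hC, Matrix.of_apply, Matrix.transpose_apply] using h
  -- expansion of wd (Psiu) and wdc (Psiu)
  have e3 : ∀ w ∈ Ω, ∀ i d, wd (Psiu Ψ G i) d w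
      = ∑ l, ((starRingEnd ℂ) (gm Ψ l d w) * G w i l
        + (starRingEnd ℂ) (Psil Ψ l w) * wd (fun v => G v i l) d w) := by
    intro w hw i d
    have s1 : wd (Psiu Ψ G i) d w
        = ∑ l, wd (fun x => (starRingEnd ℂ) (Psil Ψ l x) * G x i l) d w :=
      wd_sum Finset.univ (fun l _ => (hda (hconj_smooth l) hw).mul (hda (hGsm i l) hw)) d
    rw [s1]
    refine Finset.sum_congr rfl fun l _ => ?_
    rw [wd_mul (hda (hconj_smooth l) hw) (hda (hGsm i l) hw) d, wd_conj]
    rfl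
  have e3c : ∀ w ∈ Ω, ∀ j k, wdc (Psiu Ψ G j) k w
      = ∑ l, ((starRingEnd ℂ) (wd (Psil Ψ l) k w) * G w j l
        + (starRingEnd ℂ) (Psil Ψ l w) * wdc (fun v => G v j l) k w) := by
    intro w hw j k
    have s1 : wdc (Psiu Ψ G j) k w
        = ∑ l, wdc (fun x => (starRingEnd ℂ) (Psil Ψ l x) * G x j l) k w :=
      wdc_sum Finset.univ (fun l _ => (hda (hconj_smooth l) hw).mul (hda (hGsm j l) hw)) k
    rw [s1]
    refine Finset.sum_congr rfl fun l _ => ?_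
    rw [wdc_mul (hda (hconj_smooth l) hw) (hda (hGsm j l) hw) k, wdc_conj]
  -- main first statement
  have main1 : ∀ w ∈ Ω, ∀ j,
      ∑ i, (wd (Psil Ψ i) j w - ∑ k, Gam Ψ G k i j w * Psil Ψ k w) * Psiu Ψ G i w
        = - Psil Ψ j w := by
    intro w hw j
    have hD1 : ∑ i, (wd (Psil Ψ i) j w * Psiu Ψ G i w
        + Psil Ψ i w * (∑ l, ((starRingEnd ℂ) (gm Ψ l j w) * G w i l
          + (starRingEnd ℂ) (Psil Ψ l w) * wd (fun v => G v i l) j w))) = 0 := by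
      have e0 : wd (fun x => ∑ i, Psil Ψ i x * Psiu Ψ G i x) j w = 0 :=
        wd_constOn hΩ (fun x hx => hconst x hx) hw j
      have e1 : wd (fun x => ∑ i, Psil Ψ i x * Psiu Ψ G i x) j w
          = ∑ i, wd (fun x => Psil Ψ i x * Psiu Ψ G i x) j w :=
        wd_sum Finset.univ
          (fun i _ => (hda (hPsil_smooth i) hw).mul (hda (hPsiu_smooth i) hw)) j
      calc ∑ i, (wd (Psil Ψ i) j w * Psiu Ψ G i w
          + Psil Ψ i w * (∑ l, ((starRingEnd ℂ) (gm Ψ l j w) * G w i l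
            + (starRingEnd ℂ) (Psil Ψ l w) * wd (fun v => G v i l) j w)))
          = ∑ i, wd (fun x => Psil Ψ i x * Psiu Ψ G i x) j w := by
            refine Finset.sum_congr rfl fun i _ => ?_
            rw [wd_mul (hda (hPsil_smooth i) hw) (hda (hPsiu_smooth i) hw) j, e3 w hw i j]
        _ = 0 := by rw [← e1]; exact e0
    have hD2 : ∀ i k, ∑ l, (wd (fun v => G v i l) j w * gm Ψ k l w
        + G w i l * wd (gm Ψ k l) j w) = 0 := by
      intro i k
      have e0 : wd (fun x => ∑ l, G x i l * gm Ψ k l x) j w = 0 :=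
        wd_constOn hΩ (fun x hx => hG' x hx i k) hw j
      have e1 : wd (fun x => ∑ l, G x i l * gm Ψ k l x) j w
          = ∑ l, wd (fun x => G x i l * gm Ψ k l x) j w :=
        wd_sum Finset.univ
          (fun l _ => (hda (hGsm i l) hw).mul (hda (hgm_smooth k l) hw)) j
      calc ∑ l, (wd (fun v => G v i l) j w * gm Ψ k l w + G w i l * wd (gm Ψ k l) j w)
          = ∑ l, wd (fun x => G x i l * gm Ψ k l x) j w := by
            refine Finset.sum_congr rfl fun l _ => ?_
            rw [wd_mul (hda (hGsm i l) hw) (hda (hgm_smooth k l) hw) j]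
        _ = 0 := by rw [← e1]; exact e0
    exact alg1 (fun i => Psil Ψ i w) (fun i => Psiu Ψ G i w)
      (fun i l => gm Ψ i l w) (fun i l => G w i l)
      (fun i d => wd (Psil Ψ i) d w) (fun b l d => wd (gm Ψ b l) d w)
      (fun i l d => wd (fun v => G v i l) d w) (fun k d b => Gam Ψ G k d b w) j
      (fun i => rfl) (fun i l => (hmat w hw).2.2 i l) (fun l l' => (hmat w hw).1 l l')
      (fun k d b => rfl) (fun k l d => hDP_symm w hw k l d) hD1 hD2
  refine ⟨main1, ?_⟩
  intro w hw j
  have hD3 : ∀ i k, ∑ l, ((starRingEnd ℂ) (wd (gm Ψ l i) k w) * G w j l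
      + gm Ψ i l w * wdc (fun v => G v j l) k w) = 0 := by
    intro i k
    have e0 : wdc (fun x => ∑ l, gm Ψ i l x * G x j l) k w = 0 :=
      wdc_constOn hΩ (fun x hx => hG x hx i j) hw k
    have e1 : wdc (fun x => ∑ l, gm Ψ i l x * G x j l) k w
        = ∑ l, wdc (fun x => gm Ψ i l x * G x j l) k w :=
      wdc_sum Finset.univ
        (fun l _ => (hda (hgm_smooth i l) hw).mul (hda (hGsm j l) hw)) k
    have e2 : ∀ l, wdc (gm Ψ i l) k w = (starRingEnd ℂ) (wd (gm Ψ l i) k w) := by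
      intro l
      have hev : gm Ψ i l =ᶠ[nhds w] (fun x => (starRingEnd ℂ) (gm Ψ l i x)) := by
        filter_upwards [hΩ.mem_nhds hw] with v hv
        exact (hherm v hv l i).symm
      rw [wdc_congr hev k, wdc_conj]
    calc ∑ l, ((starRingEnd ℂ) (wd (gm Ψ l i) k w) * G w j l
        + gm Ψ i l w * wdc (fun v => G v j l) k w)
        = ∑ l, wdc (fun x => gm Ψ i l x * G x j l) k w := by
          refine Finset.sum_congr rfl fun l _ => ?_
          rw [wdc_mul (hda (hgm_smooth i l) hw) (hda (hGsm j l) hw) k, e2 l]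
      _ = 0 := by rw [← e1]; exact e0
  calc ∑ k, (starRingEnd ℂ) (Psiu Ψ G k w) * wdc (Psiu Ψ G j) k w
      = ∑ k, (starRingEnd ℂ) (Psiu Ψ G k w)
        * (∑ l, ((starRingEnd ℂ) (wd (Psil Ψ l) k w) * G w j l
          + (starRingEnd ℂ) (Psil Ψ l w) * wdc (fun v => G v j l) k w)) := by
        refine Finset.sum_congr rfl fun k _ => ?_
        rw [e3c w hw j k]
    _ = - Psiu Ψ G j w :=
      alg2 (fun i => Psil Ψ i w) (fun i => Psiu Ψ G i w)
        (fun i l => gm Ψ i l w) (fun i l => G w i l)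
        (fun i d => wd (Psil Ψ i) d w) (fun b l d => wd (gm Ψ b l) d w)
        (fun l k' d => wdc (fun v => G v l k') d w) (fun k d b => Gam Ψ G k d b w) j
        (fun i => rfl) (fun i l => (hmat w hw).2.2 i l) (fun l l' => (hmat w hw).2.1 l l')
        (fun k d b => rfl) (fun i d => hDa_symm w hw i d) (fun l => main1 w hw l) hD3
end

section
/- With Ψ a Kähler potential of ω having constant differential norm and V = grad Ψ = Ψ^k ∂_k, one has ∇_V V = V and ∇_{V̄} V = −V; hence the integral submanifolds of span{V, V̄} are totally geodesic. -/
open Complex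

namespace KA
open Matrix

variable {m : ℕ} {f g : (Fin m → ℂ) → ℂ} {w : Fin m → ℂ} {j k i : Fin m}

theorem wd_congr (h : f =ᶠ[nhds w] g) : wd f j w = wd g j w := by
  unfold wd; rw [h.fderiv_eq]

theorem wdc_congr (h : f =ᶠ[nhds w] g) : wdc f j w = wdc g j w := by
  unfold wdc; rw [h.fderiv_eq]

theorem wd_const (c : ℂ) : wd (fun _ => c) j w = 0 := by simp [wd]

theorem wdc_const (c : ℂ) : wdc (fun _ => c) j w = 0 := by simp [wdc]

theorem wd_mul (hf : DifferentiableAt ℝ f w) (hg : DifferentiableAt ℝ g w) :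
    wd (fun x => f x * g x) j w = wd f j w * g w + f w * wd g j w := by
  unfold wd; rw [fderiv_fun_mul hf hg]; simp; ring

theorem wdc_mul (hf : DifferentiableAt ℝ f w) (hg : DifferentiableAt ℝ g w) :
    wdc (fun x => f x * g x) j w = wdc f j w * g w + f w * wdc g j w := by
  unfold wdc; rw [fderiv_fun_mul hf hg]; simp; ring

theorem wd_sum {ι : Type*} (s : Finset ι) (A : ι → (Fin m → ℂ) → ℂ)
    (h : ∀ i ∈ s, DifferentiableAt ℝ (A i) w) :
    wd (fun x => ∑ i ∈ s, A i x) j w = ∑ i ∈ s, wd (A i) j w := by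
  unfold wd; rw [fderiv_fun_sum h]; simp only [ContinuousLinearMap.coe_sum', Finset.sum_apply]
  rw [Finset.mul_sum, ← Finset.sum_sub_distrib, Finset.mul_sum]

theorem wdc_sum {ι : Type*} (s : Finset ι) (A : ι → (Fin m → ℂ) → ℂ)
    (h : ∀ i ∈ s, DifferentiableAt ℝ (A i) w) :
    wdc (fun x => ∑ i ∈ s, A i x) j w = ∑ i ∈ s, wdc (A i) j w := by
  unfold wdc; rw [fderiv_fun_sum h]; simp only [ContinuousLinearMap.coe_sum', Finset.sum_apply]
  rw [Finset.mul_sum, ← Finset.sum_add_distrib, Finset.mul_sum]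

theorem fderiv_conj_comp (f : (Fin m → ℂ) → ℂ) (w : Fin m → ℂ) :
    fderiv ℝ (fun x => (starRingEnd ℂ) (f x)) w
      = (Complex.conjCLE : ℂ →L[ℝ] ℂ).comp (fderiv ℝ f w) :=
  Complex.conjCLE.comp_fderiv

theorem wd_conj : wd (fun x => (starRingEnd ℂ) (f x)) j w = (starRingEnd ℂ) (wdc f j w) := by
  unfold wd wdc
  rw [fderiv_conj_comp]
  simp [Complex.conjCLE_apply, _root_.map_mul, Complex.conj_I, _root_.map_sub, _root_.map_add, map_ofNat, map_div₀, _root_.map_one]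
  ring

theorem wdc_conj : wdc (fun x => (starRingEnd ℂ) (f x)) j w = (starRingEnd ℂ) (wd f j w) := by
  unfold wd wdc
  rw [fderiv_conj_comp]
  simp [Complex.conjCLE_apply, _root_.map_mul, Complex.conj_I, _root_.map_sub, _root_.map_add, map_ofNat, map_div₀, _root_.map_one]

variable {Ω : Set (Fin m → ℂ)}

theorem diffAt {F : Type*} [NormedAddCommGroup F] [NormedSpace ℝ F]
    {f : (Fin m → ℂ) → F} (hΩ : IsOpen Ω) (hf : ContDiffOn ℝ (⊤ : ℕ∞) f Ω) (hw : w ∈ Ω) :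
    DifferentiableAt ℝ f w :=
  (hf.contDiffAt (hΩ.mem_nhds hw)).differentiableAt (by simp)

theorem fderiv_smooth (hΩ : IsOpen Ω) (hf : ContDiffOn ℝ (⊤ : ℕ∞) f Ω) :
    ContDiffOn ℝ (⊤ : ℕ∞) (fderiv ℝ f) Ω :=
  hf.fderiv_of_isOpen hΩ (by simp)

theorem contDiffOn_wd (hΩ : IsOpen Ω) (hf : ContDiffOn ℝ (⊤ : ℕ∞) f Ω) :
    ContDiffOn ℝ (⊤ : ℕ∞) (wd f j) Ω := by
  have hfd := fderiv_smooth hΩ hf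
  exact contDiffOn_const.mul ((hfd.clm_apply contDiffOn_const).sub
    (contDiffOn_const.mul (hfd.clm_apply contDiffOn_const)))

theorem contDiffOn_wdc (hΩ : IsOpen Ω) (hf : ContDiffOn ℝ (⊤ : ℕ∞) f Ω) :
    ContDiffOn ℝ (⊤ : ℕ∞) (wdc f j) Ω := by
  have hfd := fderiv_smooth hΩ hf
  exact contDiffOn_const.mul ((hfd.clm_apply contDiffOn_const).add
    (contDiffOn_const.mul (hfd.clm_apply contDiffOn_const)))

theorem sym2 (hΩ : IsOpen Ω) (hf : ContDiffOn ℝ (⊤ : ℕ∞) f Ω) (hw : w ∈ Ω) (u v : Fin m → ℂ) :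
    fderiv ℝ (fderiv ℝ f) w u v = fderiv ℝ (fderiv ℝ f) w v u :=
  ((hf.contDiffAt (hΩ.mem_nhds hw)).isSymmSndFDerivAt (by simp [minSmoothness_of_isRCLikeNormedField]; exact WithTop.coe_le_coe.mpr le_top)) u v

theorem fderiv_app (hΩ : IsOpen Ω) (hf : ContDiffOn ℝ (⊤ : ℕ∞) f Ω) (hw : w ∈ Ω) (u : Fin m → ℂ) :
    fderiv ℝ (fun x => fderiv ℝ f x u) w = (fderiv ℝ (fderiv ℝ f) w).flip u := by
  have hd : DifferentiableAt ℝ (fderiv ℝ f) w := diffAt hΩ (fderiv_smooth hΩ hf) hw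
  rw [fderiv_clm_apply hd (differentiableAt_const u)]
  simp

theorem wd_lin {p q : (Fin m → ℂ) → ℂ} (c d : ℂ)
    (hp : DifferentiableAt ℝ p w) (hq : DifferentiableAt ℝ q w) :
    wd (fun x => c * (p x + d * q x)) k w = c * (wd p k w + d * wd q k w) := by
  unfold wd
  rw [fderiv_const_mul (a := fun x => p x + d * q x) (hp.add (hq.const_mul d)), fderiv_fun_add hp (hq.const_mul d),
    fderiv_const_mul hq]
  simp
  ring

theorem wdc_lin {p q : (Fin m → ℂ) → ℂ} (c d : ℂ)
    (hp : DifferentiableAt ℝ p w) (hq : DifferentiableAt ℝ q w) :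
    wdc (fun x => c * (p x + d * q x)) k w = c * (wdc p k w + d * wdc q k w) := by
  unfold wdc
  rw [fderiv_const_mul (a := fun x => p x + d * q x) (hp.add (hq.const_mul d)), fderiv_fun_add hp (hq.const_mul d),
    fderiv_const_mul hq]
  simp
  ring

theorem wd_eq_lincomb (f : (Fin m → ℂ) → ℂ) (i : Fin m) :
    wd f i = fun v => (1/2 : ℂ) * (fderiv ℝ f v (Pi.single i 1)
      + (-Complex.I) * fderiv ℝ f v (Pi.single i Complex.I)) := by
  funext v; unfold wd; ring

theorem wdc_eq_lincomb (f : (Fin m → ℂ) → ℂ) (i : Fin m) :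
    wdc f i = fun v => (1/2 : ℂ) * (fderiv ℝ f v (Pi.single i 1)
      + Complex.I * fderiv ℝ f v (Pi.single i Complex.I)) := by
  funext v; unfold wdc; ring

theorem wd_expand (hΩ : IsOpen Ω) (hf : ContDiffOn ℝ (⊤ : ℕ∞) f Ω) (hw : w ∈ Ω) (i k : Fin m) :
    wd (fun v => wd f i v) k w =
      (1/2 : ℂ) * ((1/2 : ℂ) * (fderiv ℝ (fderiv ℝ f) w (Pi.single k 1) (Pi.single i 1)
          + (-Complex.I) * fderiv ℝ (fderiv ℝ f) w (Pi.single k Complex.I) (Pi.single i 1))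
        + (-Complex.I) * ((1/2 : ℂ) * (fderiv ℝ (fderiv ℝ f) w (Pi.single k 1) (Pi.single i Complex.I)
          + (-Complex.I) * fderiv ℝ (fderiv ℝ f) w (Pi.single k Complex.I) (Pi.single i Complex.I)))) := by
  have hd : DifferentiableAt ℝ (fderiv ℝ f) w := diffAt hΩ (fderiv_smooth hΩ hf) hw
  have hP : ∀ u : Fin m → ℂ, DifferentiableAt ℝ (fun x => fderiv ℝ f x u) w :=
    fun u => hd.clm_apply (differentiableAt_const u)
  have happ : ∀ (u : Fin m → ℂ) (k' : Fin m), wd (fun x => fderiv ℝ f x u) k' w =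
      (1/2 : ℂ) * (fderiv ℝ (fderiv ℝ f) w (Pi.single k' 1) u
        + (-Complex.I) * fderiv ℝ (fderiv ℝ f) w (Pi.single k' Complex.I) u) := by
    intro u k'
    unfold wd
    rw [fderiv_app hΩ hf hw u]
    simp only [ContinuousLinearMap.flip_apply]
    try ring
  have : (fun v => wd f i v) = fun v => (1/2 : ℂ) * ((fun x => fderiv ℝ f x (Pi.single i 1)) v
      + (-Complex.I) * (fun x => fderiv ℝ f x (Pi.single i Complex.I)) v) := wd_eq_lincomb f i
  rw [this, wd_lin (1/2) (-Complex.I) (hP _) (hP _), happ, happ]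

theorem wdc_expand (hΩ : IsOpen Ω) (hf : ContDiffOn ℝ (⊤ : ℕ∞) f Ω) (hw : w ∈ Ω) (i k : Fin m) :
    wdc (fun v => wd f i v) k w =
      (1/2 : ℂ) * ((1/2 : ℂ) * (fderiv ℝ (fderiv ℝ f) w (Pi.single k 1) (Pi.single i 1)
          + Complex.I * fderiv ℝ (fderiv ℝ f) w (Pi.single k Complex.I) (Pi.single i 1))
        + (-Complex.I) * ((1/2 : ℂ) * (fderiv ℝ (fderiv ℝ f) w (Pi.single k 1) (Pi.single i Complex.I)
          + Complex.I * fderiv ℝ (fderiv ℝ f) w (Pi.single k Complex.I) (Pi.single i Complex.I)))) := by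
  have hd : DifferentiableAt ℝ (fderiv ℝ f) w := diffAt hΩ (fderiv_smooth hΩ hf) hw
  have hP : ∀ u : Fin m → ℂ, DifferentiableAt ℝ (fun x => fderiv ℝ f x u) w :=
    fun u => hd.clm_apply (differentiableAt_const u)
  have happ : ∀ (u : Fin m → ℂ) (k' : Fin m), wdc (fun x => fderiv ℝ f x u) k' w =
      (1/2 : ℂ) * (fderiv ℝ (fderiv ℝ f) w (Pi.single k' 1) u
        + Complex.I * fderiv ℝ (fderiv ℝ f) w (Pi.single k' Complex.I) u) := by
    intro u k'
    unfold wdc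
    rw [fderiv_app hΩ hf hw u]
    simp only [ContinuousLinearMap.flip_apply]
    try ring
  have : (fun v => wd f i v) = fun v => (1/2 : ℂ) * ((fun x => fderiv ℝ f x (Pi.single i 1)) v
      + (-Complex.I) * (fun x => fderiv ℝ f x (Pi.single i Complex.I)) v) := wd_eq_lincomb f i
  rw [this, wdc_lin (1/2) (-Complex.I) (hP _) (hP _), happ, happ]

theorem wd_wdc_expand (hΩ : IsOpen Ω) (hf : ContDiffOn ℝ (⊤ : ℕ∞) f Ω) (hw : w ∈ Ω) (i k : Fin m) :
    wd (fun v => wdc f i v) k w =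
      (1/2 : ℂ) * ((1/2 : ℂ) * (fderiv ℝ (fderiv ℝ f) w (Pi.single k 1) (Pi.single i 1)
          + (-Complex.I) * fderiv ℝ (fderiv ℝ f) w (Pi.single k Complex.I) (Pi.single i 1))
        + Complex.I * ((1/2 : ℂ) * (fderiv ℝ (fderiv ℝ f) w (Pi.single k 1) (Pi.single i Complex.I)
          + (-Complex.I) * fderiv ℝ (fderiv ℝ f) w (Pi.single k Complex.I) (Pi.single i Complex.I)))) := by
  have hd : DifferentiableAt ℝ (fderiv ℝ f) w := diffAt hΩ (fderiv_smooth hΩ hf) hw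
  have hP : ∀ u : Fin m → ℂ, DifferentiableAt ℝ (fun x => fderiv ℝ f x u) w :=
    fun u => hd.clm_apply (differentiableAt_const u)
  have happ : ∀ (u : Fin m → ℂ) (k' : Fin m), wd (fun x => fderiv ℝ f x u) k' w =
      (1/2 : ℂ) * (fderiv ℝ (fderiv ℝ f) w (Pi.single k' 1) u
        + (-Complex.I) * fderiv ℝ (fderiv ℝ f) w (Pi.single k' Complex.I) u) := by
    intro u k'
    unfold wd
    rw [fderiv_app hΩ hf hw u]
    simp only [ContinuousLinearMap.flip_apply]
    try ring
  have : (fun v => wdc f i v) = fun v => (1/2 : ℂ) * ((fun x => fderiv ℝ f x (Pi.single i 1)) v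
      + Complex.I * (fun x => fderiv ℝ f x (Pi.single i Complex.I)) v) := wdc_eq_lincomb f i
  rw [this, wd_lin (1/2) Complex.I (hP _) (hP _), happ, happ]

theorem wd_wd_symm (hΩ : IsOpen Ω) (hf : ContDiffOn ℝ (⊤ : ℕ∞) f Ω) (hw : w ∈ Ω) (i k : Fin m) :
    wd (fun v => wd f i v) k w = wd (fun v => wd f k v) i w := by
  rw [wd_expand hΩ hf hw i k, wd_expand hΩ hf hw k i,
    sym2 hΩ hf hw (Pi.single k 1) (Pi.single i 1),
    sym2 hΩ hf hw (Pi.single k Complex.I) (Pi.single i 1),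
    sym2 hΩ hf hw (Pi.single k 1) (Pi.single i Complex.I),
    sym2 hΩ hf hw (Pi.single k Complex.I) (Pi.single i Complex.I)]
  ring

theorem wd_wdc_symm (hΩ : IsOpen Ω) (hf : ContDiffOn ℝ (⊤ : ℕ∞) f Ω) (hw : w ∈ Ω) (i k : Fin m) :
    wd (fun v => wdc f i v) k w = wdc (fun v => wd f k v) i w := by
  rw [wd_wdc_expand hΩ hf hw i k, wdc_expand hΩ hf hw k i,
    sym2 hΩ hf hw (Pi.single k 1) (Pi.single i 1),
    sym2 hΩ hf hw (Pi.single k 1) (Pi.single i Complex.I),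
    sym2 hΩ hf hw (Pi.single k Complex.I) (Pi.single i 1),
    sym2 hΩ hf hw (Pi.single k Complex.I) (Pi.single i Complex.I)]
  ring

section main

variable {Ψ : (Fin m → ℂ) → ℝ} {G : (Fin m → ℂ) → Matrix (Fin m) (Fin m) ℂ}

theorem conj_smooth (hΩ : IsOpen Ω) (hf : ContDiffOn ℝ (⊤ : ℕ∞) f Ω) :
    ContDiffOn ℝ (⊤ : ℕ∞) (fun x => (starRingEnd ℂ) (f x)) Ω := by
  have : (fun x => (starRingEnd ℂ) (f x)) = (⇑(Complex.conjCLE.toContinuousLinearMap)) ∘ f := by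
    funext x; simp [Complex.conjCLE_apply]
  rw [this]
  exact (Complex.conjCLE.toContinuousLinearMap.contDiff).comp_contDiffOn hf

theorem smooth_Psil (hΩ : IsOpen Ω) (hΨ : ContDiffOn ℝ (⊤ : ℕ∞) (fun u => (Ψ u : ℂ)) Ω) (i : Fin m) :
    ContDiffOn ℝ (⊤ : ℕ∞) (Psil Ψ i) Ω := contDiffOn_wd hΩ hΨ

theorem smooth_gm (hΩ : IsOpen Ω) (hΨ : ContDiffOn ℝ (⊤ : ℕ∞) (fun u => (Ψ u : ℂ)) Ω) (i j : Fin m) :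
    ContDiffOn ℝ (⊤ : ℕ∞) (gm Ψ i j) Ω := contDiffOn_wdc hΩ (contDiffOn_wd hΩ hΨ)

theorem smooth_Psiu (hΩ : IsOpen Ω) (hΨ : ContDiffOn ℝ (⊤ : ℕ∞) (fun u => (Ψ u : ℂ)) Ω)
    (hGsm : ∀ i j, ContDiffOn ℝ (⊤ : ℕ∞) (fun w => G w i j) Ω) (i : Fin m) :
    ContDiffOn ℝ (⊤ : ℕ∞) (Psiu Ψ G i) Ω := by
  have : Psiu Ψ G i = fun w => ∑ j, (starRingEnd ℂ) (Psil Ψ j w) * G w i j := rfl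
  rw [this]
  apply ContDiffOn.sum
  intro l _
  exact (conj_smooth hΩ (smooth_Psil hΩ hΨ l)).mul (hGsm i l)

theorem psi_real (Ψ : (Fin m → ℂ) → ℝ) :
    (fun u => (starRingEnd ℂ) ((Ψ u : ℂ))) = (fun u => ((Ψ u : ℂ))) :=
  funext fun u => Complex.conj_ofReal _

theorem conj_Psil_eq (Ψ : (Fin m → ℂ) → ℝ) (i : Fin m) :
    (fun x => (starRingEnd ℂ) (Psil Ψ i x)) = fun x => wdc (fun u => (Ψ u : ℂ)) i x := by
  funext x
  have : (starRingEnd ℂ) (Psil Ψ i x) = wdc (fun u => (starRingEnd ℂ) ((Ψ u : ℂ))) i x :=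
    (wdc_conj).symm
  rw [this, psi_real]

theorem gm_herm (hΩ : IsOpen Ω) (hΨ : ContDiffOn ℝ (⊤ : ℕ∞) (fun u => (Ψ u : ℂ)) Ω)
    (hw : w ∈ Ω) (i j : Fin m) :
    (starRingEnd ℂ) (gm Ψ i j w) = gm Ψ j i w := by
  have h1 : (starRingEnd ℂ) (gm Ψ i j w) = wd (fun x => (starRingEnd ℂ) (Psil Ψ i x)) j w :=
    (wd_conj).symm
  rw [h1, conj_Psil_eq]
  exact wd_wdc_symm hΩ hΨ hw i j

theorem gm_third (hΩ : IsOpen Ω) (hΨ : ContDiffOn ℝ (⊤ : ℕ∞) (fun u => (Ψ u : ℂ)) Ω)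
    (hw : w ∈ Ω) (p q k : Fin m) :
    wd (gm Ψ p q) k w = wd (gm Ψ k q) p w := by
  have he : ∀ p' : Fin m, gm Ψ p' q =ᶠ[nhds w]
      (fun v => wd (fun x => wdc (fun u => (Ψ u : ℂ)) q x) p' v) := by
    intro p'
    filter_upwards [hΩ.mem_nhds hw] with v hv
    exact (wd_wdc_symm hΩ hΨ hv q p').symm
  rw [wd_congr (he p), wd_congr (he k)]
  exact wd_wd_symm hΩ (contDiffOn_wdc hΩ hΨ) hw p k

theorem gm_wdc_conj (hΩ : IsOpen Ω) (hΨ : ContDiffOn ℝ (⊤ : ℕ∞) (fun u => (Ψ u : ℂ)) Ω)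
    (hw : w ∈ Ω) (p q k : Fin m) :
    wdc (gm Ψ p q) k w = (starRingEnd ℂ) (wd (gm Ψ q p) k w) := by
  have he : gm Ψ p q =ᶠ[nhds w] fun v => (starRingEnd ℂ) (gm Ψ q p v) := by
    filter_upwards [hΩ.mem_nhds hw] with v hv
    exact (gm_herm hΩ hΨ hv q p).symm
  rw [wdc_congr he, wdc_conj]

theorem GM_left (hw : w ∈ Ω)
    (hG : ∀ w ∈ Ω, ∀ i k, ∑ j, gm Ψ i j w * G w k j = if i = k then 1 else 0)
    (l q : Fin m) :
    (∑ p, G w p l * gm Ψ p q w) = if l = q then 1 else 0 := by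
  set M : Matrix (Fin m) (Fin m) ℂ := Matrix.of fun p r => gm Ψ p r w with hM
  have h1 : M * (G w)ᵀ = 1 := by
    ext i k
    simpa [Matrix.mul_apply, Matrix.one_apply, hM] using hG w hw i k
  have h2 : (G w)ᵀ * M = 1 := mul_eq_one_comm.mp h1
  have h3 := congrFun (congrFun h2 l) q
  simpa [Matrix.mul_apply, Matrix.one_apply, hM] using h3

theorem G_herm (hΩ : IsOpen Ω) (hΨ : ContDiffOn ℝ (⊤ : ℕ∞) (fun u => (Ψ u : ℂ)) Ω) (hw : w ∈ Ω)
    (hG : ∀ w ∈ Ω, ∀ i k, ∑ j, gm Ψ i j w * G w k j = if i = k then 1 else 0)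
    (hG' : ∀ w ∈ Ω, ∀ i k, ∑ j, G w i j * gm Ψ k j w = if i = k then 1 else 0)
    (l j : Fin m) :
    (starRingEnd ℂ) (G w l j) = G w j l := by
  set M : Matrix (Fin m) (Fin m) ℂ := Matrix.of fun p r => gm Ψ p r w with hM
  have h1 : M * (G w)ᵀ = 1 := by
    ext i k
    simpa [Matrix.mul_apply, Matrix.one_apply, hM] using hG w hw i k
  have h5 : G w * Mᵀ = 1 := by
    ext i k
    simpa [Matrix.mul_apply, Matrix.one_apply, hM] using hG' w hw i k
  have h6 : Mᵀ * G w = 1 := mul_eq_one_comm.mp h5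
  have h3 : M.map (starRingEnd ℂ) = Mᵀ := by
    ext i k
    simpa [hM, Matrix.map_apply] using gm_herm hΩ hΨ hw i k
  have h4 : Mᵀ * ((G w)ᵀ.map (starRingEnd ℂ)) = 1 := by
    have := congrArg (fun N => N.map (starRingEnd ℂ)) h1
    simpa [Matrix.map_mul, Matrix.map_one (starRingEnd ℂ) (map_zero _) (map_one _), h3]
      using this
  have h7 : ((G w)ᵀ.map (starRingEnd ℂ)) * Mᵀ = 1 := mul_eq_one_comm.mp h4
  have h8 : ((G w)ᵀ.map (starRingEnd ℂ)) = G w := by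
    calc ((G w)ᵀ.map (starRingEnd ℂ)) = ((G w)ᵀ.map (starRingEnd ℂ)) * (Mᵀ * G w) := by
          rw [h6, Matrix.mul_one]
      _ = (((G w)ᵀ.map (starRingEnd ℂ)) * Mᵀ) * G w := by rw [Matrix.mul_assoc]
      _ = G w := by rw [h7, Matrix.one_mul]
  have := congrFun (congrFun h8 j) l
  simpa [Matrix.map_apply, Matrix.transpose_apply] using this

theorem solve_linear (hw : w ∈ Ω)
    (hG : ∀ w ∈ Ω, ∀ i k, ∑ j, gm Ψ i j w * G w k j = if i = k then 1 else 0)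
    (A B : Fin m → ℂ) (h : ∀ p, ∑ l, A l * gm Ψ p l w = - B p) (q : Fin m) :
    A q = -∑ p, B p * G w p q := by
  have h1 : A q = ∑ l, A l * (if q = l then 1 else 0) := by
    simp [mul_ite, mul_one, mul_zero, Finset.sum_ite_eq]
  rw [h1]
  calc ∑ l, A l * (if q = l then 1 else 0)
      = ∑ l, A l * ∑ p, G w p q * gm Ψ p l w := by
        refine Finset.sum_congr rfl fun l _ => ?_
        rw [GM_left hw hG q l]
    _ = ∑ l, ∑ p, G w p q * (A l * gm Ψ p l w) := by
        refine Finset.sum_congr rfl fun l _ => ?_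
        rw [Finset.mul_sum]
        exact Finset.sum_congr rfl fun p _ => by ring
    _ = ∑ p, G w p q * ∑ l, A l * gm Ψ p l w := by
        rw [Finset.sum_comm]
        exact Finset.sum_congr rfl fun p _ => (Finset.mul_sum _ _ _).symm
    _ = ∑ p, G w p q * (-B p) := Finset.sum_congr rfl fun p _ => by rw [h p]
    _ = -∑ p, B p * G w p q := by
        rw [← Finset.sum_neg_distrib]
        exact Finset.sum_congr rfl fun p _ => by ring

theorem dG_formula (hΩ : IsOpen Ω) (hΨ : ContDiffOn ℝ (⊤ : ℕ∞) (fun u => (Ψ u : ℂ)) Ω)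
    (hGsm : ∀ i j, ContDiffOn ℝ (⊤ : ℕ∞) (fun w => G w i j) Ω) (hw : w ∈ Ω)
    (hG : ∀ w ∈ Ω, ∀ i k, ∑ j, gm Ψ i j w * G w k j = if i = k then 1 else 0)
    (hG' : ∀ w ∈ Ω, ∀ i k, ∑ j, G w i j * gm Ψ k j w = if i = k then 1 else 0)
    (j k q : Fin m) :
    wd (fun v => G v j q) k w
      = -∑ p, (∑ l, G w j l * wd (gm Ψ p l) k w) * G w p q := by
  have hdiffG : ∀ a b : Fin m, DifferentiableAt ℝ (fun v => G v a b) w :=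
    fun a b => diffAt hΩ (hGsm a b) hw
  have hdiffgm : ∀ a b : Fin m, DifferentiableAt ℝ (gm Ψ a b) w :=
    fun a b => diffAt hΩ (smooth_gm hΩ hΨ a b) hw
  refine solve_linear hw hG (fun l => wd (fun v => G v j l) k w)
    (fun p => ∑ l, G w j l * wd (gm Ψ p l) k w) (fun p => ?_) q
  have he : (fun v => ∑ l, G v j l * gm Ψ p l v) =ᶠ[nhds w]
      (fun _ => (if j = p then 1 else 0 : ℂ)) := by
    filter_upwards [hΩ.mem_nhds hw] with v hv
    exact hG' v hv j p
  have h0 : wd (fun v => ∑ l, G v j l * gm Ψ p l v) k w = 0 := by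
    rw [wd_congr he, wd_const]
  rw [wd_sum Finset.univ (fun l v => G v j l * gm Ψ p l v)
    (fun l _ => (hdiffG j l).mul (hdiffgm p l))] at h0
  have hterm : ∀ l : Fin m, wd (fun v => G v j l * gm Ψ p l v) k w
      = wd (fun v => G v j l) k w * gm Ψ p l w + G w j l * wd (gm Ψ p l) k w :=
    fun l => wd_mul (hdiffG j l) (hdiffgm p l)
  simp only [hterm] at h0
  rw [Finset.sum_add_distrib] at h0
  exact eq_neg_of_add_eq_zero_left h0

theorem dGc_formula (hΩ : IsOpen Ω) (hΨ : ContDiffOn ℝ (⊤ : ℕ∞) (fun u => (Ψ u : ℂ)) Ω)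
    (hGsm : ∀ i j, ContDiffOn ℝ (⊤ : ℕ∞) (fun w => G w i j) Ω) (hw : w ∈ Ω)
    (hG : ∀ w ∈ Ω, ∀ i k, ∑ j, gm Ψ i j w * G w k j = if i = k then 1 else 0)
    (hG' : ∀ w ∈ Ω, ∀ i k, ∑ j, G w i j * gm Ψ k j w = if i = k then 1 else 0)
    (j k q : Fin m) :
    wdc (fun v => G v j q) k w
      = -∑ p, (∑ l, G w j l * wdc (gm Ψ p l) k w) * G w p q := by
  have hdiffG : ∀ a b : Fin m, DifferentiableAt ℝ (fun v => G v a b) w :=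
    fun a b => diffAt hΩ (hGsm a b) hw
  have hdiffgm : ∀ a b : Fin m, DifferentiableAt ℝ (gm Ψ a b) w :=
    fun a b => diffAt hΩ (smooth_gm hΩ hΨ a b) hw
  refine solve_linear hw hG (fun l => wdc (fun v => G v j l) k w)
    (fun p => ∑ l, G w j l * wdc (gm Ψ p l) k w) (fun p => ?_) q
  have he : (fun v => ∑ l, G v j l * gm Ψ p l v) =ᶠ[nhds w]
      (fun _ => (if j = p then 1 else 0 : ℂ)) := by
    filter_upwards [hΩ.mem_nhds hw] with v hv
    exact hG' v hv j p
  have h0 : wdc (fun v => ∑ l, G v j l * gm Ψ p l v) k w = 0 := by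
    rw [wdc_congr he, wdc_const]
  rw [wdc_sum Finset.univ (fun l v => G v j l * gm Ψ p l v)
    (fun l _ => (hdiffG j l).mul (hdiffgm p l))] at h0
  have hterm : ∀ l : Fin m, wdc (fun v => G v j l * gm Ψ p l v) k w
      = wdc (fun v => G v j l) k w * gm Ψ p l w + G w j l * wdc (gm Ψ p l) k w :=
    fun l => wdc_mul (hdiffG j l) (hdiffgm p l)
  simp only [hterm] at h0
  rw [Finset.sum_add_distrib] at h0
  exact eq_neg_of_add_eq_zero_left h0

theorem conj_Psiu (hΩ : IsOpen Ω) (hΨ : ContDiffOn ℝ (⊤ : ℕ∞) (fun u => (Ψ u : ℂ)) Ω) (hw : w ∈ Ω)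
    (hG : ∀ w ∈ Ω, ∀ i k, ∑ j, gm Ψ i j w * G w k j = if i = k then 1 else 0)
    (hG' : ∀ w ∈ Ω, ∀ i k, ∑ j, G w i j * gm Ψ k j w = if i = k then 1 else 0)
    (q : Fin m) :
    (starRingEnd ℂ) (Psiu Ψ G q w) = ∑ l, Psil Ψ l w * G w l q := by
  have : Psiu Ψ G q w = ∑ l, (starRingEnd ℂ) (Psil Ψ l w) * G w q l := rfl
  rw [this, map_sum]
  refine Finset.sum_congr rfl fun l _ => ?_
  rw [_root_.map_mul, RingHomCompTriple.comp_apply, RingHom.id_apply,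
    G_herm hΩ hΨ hw hG hG' q l]

theorem dPsiu (hΩ : IsOpen Ω) (hΨ : ContDiffOn ℝ (⊤ : ℕ∞) (fun u => (Ψ u : ℂ)) Ω)
    (hGsm : ∀ i j, ContDiffOn ℝ (⊤ : ℕ∞) (fun w => G w i j) Ω) (hw : w ∈ Ω)
    (hG : ∀ w ∈ Ω, ∀ i k, ∑ j, gm Ψ i j w * G w k j = if i = k then 1 else 0)
    (hG' : ∀ w ∈ Ω, ∀ i k, ∑ j, G w i j * gm Ψ k j w = if i = k then 1 else 0)
    (j k : Fin m) :
    wd (Psiu Ψ G j) k w = (if k = j then 1 else 0)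
      - ∑ p, (∑ q, G w j q * wd (gm Ψ p q) k w) * Psiu Ψ G p w := by
  have hdiffG : ∀ a b : Fin m, DifferentiableAt ℝ (fun v => G v a b) w :=
    fun a b => diffAt hΩ (hGsm a b) hw
  have hdconj : ∀ l : Fin m, DifferentiableAt ℝ (fun v => (starRingEnd ℂ) (Psil Ψ l v)) w :=
    fun l => diffAt hΩ (conj_smooth hΩ (smooth_Psil hΩ hΨ l)) hw
  have h1 : wd (Psiu Ψ G j) k w
      = ∑ l, wd (fun v => (starRingEnd ℂ) (Psil Ψ l v) * G v j l) k w :=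
    wd_sum Finset.univ (fun l v => (starRingEnd ℂ) (Psil Ψ l v) * G v j l)
      (fun l _ => (hdconj l).mul (hdiffG j l))
  have h2 : ∀ l : Fin m, wd (fun v => (starRingEnd ℂ) (Psil Ψ l v) * G v j l) k w
      = gm Ψ k l w * G w j l
        + (starRingEnd ℂ) (Psil Ψ l w) * wd (fun v => G v j l) k w := by
    intro l
    rw [wd_mul (hdconj l) (hdiffG j l)]
    congr 1
    rw [wd_conj]
    have : wdc (Psil Ψ l) k w = gm Ψ l k w := rfl
    rw [this, gm_herm hΩ hΨ hw l k]
  rw [h1]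
  simp only [h2]
  rw [Finset.sum_add_distrib, hG w hw k j, sub_eq_add_neg]
  congr 1
  calc ∑ l, (starRingEnd ℂ) (Psil Ψ l w) * wd (fun v => G v j l) k w
      = ∑ l, (starRingEnd ℂ) (Psil Ψ l w)
          * (-∑ p, (∑ q, G w j q * wd (gm Ψ p q) k w) * G w p l) := by
        refine Finset.sum_congr rfl fun l _ => ?_
        rw [dG_formula hΩ hΨ hGsm hw hG hG' j k l]
    _ = ∑ l, ∑ p, -((∑ q, G w j q * wd (gm Ψ p q) k w)
          * ((starRingEnd ℂ) (Psil Ψ l w) * G w p l)) := by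
        refine Finset.sum_congr rfl fun l _ => ?_
        rw [mul_neg, Finset.mul_sum, ← Finset.sum_neg_distrib]
        exact Finset.sum_congr rfl fun p _ => by ring
    _ = ∑ p, ∑ l, -((∑ q, G w j q * wd (gm Ψ p q) k w)
          * ((starRingEnd ℂ) (Psil Ψ l w) * G w p l)) := Finset.sum_comm
    _ = -∑ p, (∑ q, G w j q * wd (gm Ψ p q) k w) * Psiu Ψ G p w := by
        rw [← Finset.sum_neg_distrib]
        refine Finset.sum_congr rfl fun p _ => ?_
        have : Psiu Ψ G p w = ∑ l, (starRingEnd ℂ) (Psil Ψ l w) * G w p l := rfl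
        rw [this, Finset.mul_sum, ← Finset.sum_neg_distrib]

theorem dcPsiu (hΩ : IsOpen Ω) (hΨ : ContDiffOn ℝ (⊤ : ℕ∞) (fun u => (Ψ u : ℂ)) Ω)
    (hGsm : ∀ i j, ContDiffOn ℝ (⊤ : ℕ∞) (fun w => G w i j) Ω) (hw : w ∈ Ω)
    (hG : ∀ w ∈ Ω, ∀ i k, ∑ j, gm Ψ i j w * G w k j = if i = k then 1 else 0)
    (hG' : ∀ w ∈ Ω, ∀ i k, ∑ j, G w i j * gm Ψ k j w = if i = k then 1 else 0)
    (j k : Fin m) :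
    wdc (Psiu Ψ G j) k w = ∑ l, (starRingEnd ℂ) (wd (Psil Ψ l) k w) * G w j l
      - ∑ p, (∑ q, G w j q * (starRingEnd ℂ) (wd (gm Ψ q p) k w)) * Psiu Ψ G p w := by
  have hdiffG : ∀ a b : Fin m, DifferentiableAt ℝ (fun v => G v a b) w :=
    fun a b => diffAt hΩ (hGsm a b) hw
  have hdconj : ∀ l : Fin m, DifferentiableAt ℝ (fun v => (starRingEnd ℂ) (Psil Ψ l v)) w :=
    fun l => diffAt hΩ (conj_smooth hΩ (smooth_Psil hΩ hΨ l)) hw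
  have h1 : wdc (Psiu Ψ G j) k w
      = ∑ l, wdc (fun v => (starRingEnd ℂ) (Psil Ψ l v) * G v j l) k w :=
    wdc_sum Finset.univ (fun l v => (starRingEnd ℂ) (Psil Ψ l v) * G v j l)
      (fun l _ => (hdconj l).mul (hdiffG j l))
  have h2 : ∀ l : Fin m, wdc (fun v => (starRingEnd ℂ) (Psil Ψ l v) * G v j l) k w
      = (starRingEnd ℂ) (wd (Psil Ψ l) k w) * G w j l
        + (starRingEnd ℂ) (Psil Ψ l w) * wdc (fun v => G v j l) k w := by
    intro l
    rw [wdc_mul (hdconj l) (hdiffG j l), wdc_conj]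
  rw [h1]
  simp only [h2]
  rw [Finset.sum_add_distrib]
  rw [sub_eq_add_neg]
  congr 1
  calc ∑ l, (starRingEnd ℂ) (Psil Ψ l w) * wdc (fun v => G v j l) k w
      = ∑ l, (starRingEnd ℂ) (Psil Ψ l w)
          * (-∑ p, (∑ q, G w j q * ((starRingEnd ℂ) (wd (gm Ψ q p) k w))) * G w p l) := by
        refine Finset.sum_congr rfl fun l _ => ?_
        rw [dGc_formula hΩ hΨ hGsm hw hG hG' j k l]
        congr 2
        refine Finset.sum_congr rfl fun p _ => ?_
        congr 1
        refine Finset.sum_congr rfl fun q _ => ?_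
        rw [gm_wdc_conj hΩ hΨ hw p q k]
    _ = ∑ l, ∑ p, -((∑ q, G w j q * ((starRingEnd ℂ) (wd (gm Ψ q p) k w)))
          * ((starRingEnd ℂ) (Psil Ψ l w) * G w p l)) := by
        refine Finset.sum_congr rfl fun l _ => ?_
        rw [mul_neg, Finset.mul_sum, ← Finset.sum_neg_distrib]
        exact Finset.sum_congr rfl fun p _ => by ring
    _ = ∑ p, ∑ l, -((∑ q, G w j q * ((starRingEnd ℂ) (wd (gm Ψ q p) k w)))
          * ((starRingEnd ℂ) (Psil Ψ l w) * G w p l)) := Finset.sum_comm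
    _ = -∑ p, (∑ q, G w j q * ((starRingEnd ℂ) (wd (gm Ψ q p) k w))) * Psiu Ψ G p w := by
        rw [← Finset.sum_neg_distrib]
        refine Finset.sum_congr rfl fun p _ => ?_
        have : Psiu Ψ G p w = ∑ l, (starRingEnd ℂ) (Psil Ψ l w) * G w p l := rfl
        rw [this, Finset.mul_sum, ← Finset.sum_neg_distrib]

theorem const_identity {c : ℝ} (hΩ : IsOpen Ω) (hΨ : ContDiffOn ℝ (⊤ : ℕ∞) (fun u => (Ψ u : ℂ)) Ω)
    (hGsm : ∀ i j, ContDiffOn ℝ (⊤ : ℕ∞) (fun w => G w i j) Ω) (hw : w ∈ Ω)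
    (hG : ∀ w ∈ Ω, ∀ i k, ∑ j, gm Ψ i j w * G w k j = if i = k then 1 else 0)
    (hG' : ∀ w ∈ Ω, ∀ i k, ∑ j, G w i j * gm Ψ k j w = if i = k then 1 else 0)
    (hconst : ∀ w ∈ Ω, ∑ i, Psil Ψ i w * Psiu Ψ G i w = (c : ℂ))
    (k : Fin m) :
    ∑ i, wd (Psil Ψ i) k w * Psiu Ψ G i w
      = -Psil Ψ k w
        + ∑ p, (∑ q, (starRingEnd ℂ) (Psiu Ψ G q w) * wd (gm Ψ p q) k w)
            * Psiu Ψ G p w := by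
  have hdl : ∀ i : Fin m, DifferentiableAt ℝ (Psil Ψ i) w :=
    fun i => diffAt hΩ (smooth_Psil hΩ hΨ i) hw
  have hdu : ∀ i : Fin m, DifferentiableAt ℝ (Psiu Ψ G i) w :=
    fun i => diffAt hΩ (smooth_Psiu hΩ hΨ hGsm i) hw
  have h0 : wd (fun v => ∑ i, Psil Ψ i v * Psiu Ψ G i v) k w = 0 := by
    have he : (fun v => ∑ i, Psil Ψ i v * Psiu Ψ G i v) =ᶠ[nhds w] (fun _ => (c : ℂ)) := by
      filter_upwards [hΩ.mem_nhds hw] with v hv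
      exact hconst v hv
    rw [wd_congr he, wd_const]
  rw [wd_sum Finset.univ (fun i v => Psil Ψ i v * Psiu Ψ G i v)
    (fun i _ => (hdl i).mul (hdu i))] at h0
  have hterm : ∀ i : Fin m, wd (fun v => Psil Ψ i v * Psiu Ψ G i v) k w
      = wd (Psil Ψ i) k w * Psiu Ψ G i w + Psil Ψ i w * wd (Psiu Ψ G i) k w :=
    fun i => wd_mul (hdl i) (hdu i)
  simp only [hterm] at h0
  rw [Finset.sum_add_distrib] at h0
  have h3 : ∑ i, Psil Ψ i w * wd (Psiu Ψ G i) k w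
      = Psil Ψ k w - ∑ p, (∑ q, (starRingEnd ℂ) (Psiu Ψ G q w) * wd (gm Ψ p q) k w)
          * Psiu Ψ G p w := by
    calc ∑ i, Psil Ψ i w * wd (Psiu Ψ G i) k w
        = ∑ i, (Psil Ψ i w * (if k = i then 1 else 0)
            - ∑ p, Psil Ψ i w * ((∑ q, G w i q * wd (gm Ψ p q) k w) * Psiu Ψ G p w)) := by
          refine Finset.sum_congr rfl fun i _ => ?_
          rw [dPsiu hΩ hΨ hGsm hw hG hG' i k, mul_sub, Finset.mul_sum]
      _ = ∑ i, Psil Ψ i w * (if k = i then 1 else 0)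
          - ∑ i, ∑ p, Psil Ψ i w * ((∑ q, G w i q * wd (gm Ψ p q) k w) * Psiu Ψ G p w) :=
          Finset.sum_sub_distrib _ _
      _ = Psil Ψ k w - ∑ p, (∑ q, (starRingEnd ℂ) (Psiu Ψ G q w) * wd (gm Ψ p q) k w)
            * Psiu Ψ G p w := by
          congr 1
          · simp [mul_ite, mul_one, mul_zero, Finset.sum_ite_eq]
          · rw [Finset.sum_comm]
            refine Finset.sum_congr rfl fun p _ => ?_
            calc ∑ i, Psil Ψ i w * ((∑ q, G w i q * wd (gm Ψ p q) k w) * Psiu Ψ G p w)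
                = ∑ i, ∑ q, (Psil Ψ i w * G w i q) * wd (gm Ψ p q) k w * Psiu Ψ G p w := by
                  refine Finset.sum_congr rfl fun i _ => ?_
                  rw [Finset.sum_mul, Finset.mul_sum]
                  exact Finset.sum_congr rfl fun q _ => by ring
              _ = ∑ q, ∑ i, (Psil Ψ i w * G w i q) * wd (gm Ψ p q) k w * Psiu Ψ G p w :=
                  Finset.sum_comm
              _ = (∑ q, (starRingEnd ℂ) (Psiu Ψ G q w) * wd (gm Ψ p q) k w)
                    * Psiu Ψ G p w := by
                  rw [Finset.sum_mul]
                  refine Finset.sum_congr rfl fun q _ => ?_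
                  rw [← Finset.sum_mul, ← Finset.sum_mul, conj_Psiu hΩ hΨ hw hG hG' q]
  rw [h3] at h0
  linear_combination h0

theorem Psil_symm (hΩ : IsOpen Ω) (hΨ : ContDiffOn ℝ (⊤ : ℕ∞) (fun u => (Ψ u : ℂ)) Ω)
    (hw : w ∈ Ω) (i k : Fin m) :
    wd (Psil Ψ i) k w = wd (Psil Ψ k) i w := wd_wd_symm hΩ hΨ hw i k

theorem goal1 (hΩ : IsOpen Ω) (hΨ : ContDiffOn ℝ (⊤ : ℕ∞) (fun u => (Ψ u : ℂ)) Ω)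
    (hGsm : ∀ i j, ContDiffOn ℝ (⊤ : ℕ∞) (fun w => G w i j) Ω) (hw : w ∈ Ω)
    (hG : ∀ w ∈ Ω, ∀ i k, ∑ j, gm Ψ i j w * G w k j = if i = k then 1 else 0)
    (hG' : ∀ w ∈ Ω, ∀ i k, ∑ j, G w i j * gm Ψ k j w = if i = k then 1 else 0)
    (j : Fin m) :
    (∑ k, Psiu Ψ G k w * wd (Psiu Ψ G j) k w)
      + ∑ k, ∑ i, Psiu Ψ G k w * Gam Ψ G j k i w * Psiu Ψ G i w = Psiu Ψ G j w := by
  have h1 : ∑ k, Psiu Ψ G k w * wd (Psiu Ψ G j) k w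
      = ∑ k, (Psiu Ψ G k w * (if k = j then 1 else 0)
          - ∑ i, Psiu Ψ G k w * ((∑ q, G w j q * wd (gm Ψ i q) k w) * Psiu Ψ G i w)) := by
    refine Finset.sum_congr rfl fun k _ => ?_
    rw [dPsiu hΩ hΨ hGsm hw hG hG' j k, mul_sub, Finset.mul_sum]
  rw [h1, Finset.sum_sub_distrib]
  have h2 : ∑ k, Psiu Ψ G k w * (if k = j then 1 else 0) = Psiu Ψ G j w := by
    simp [mul_ite, mul_one, mul_zero, Finset.sum_ite_eq']
  rw [h2]
  have h3 : ∑ k, ∑ i, Psiu Ψ G k w * Gam Ψ G j k i w * Psiu Ψ G i w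
      = ∑ k, ∑ i, Psiu Ψ G k w * ((∑ q, G w j q * wd (gm Ψ i q) k w) * Psiu Ψ G i w) := by
    refine Finset.sum_congr rfl fun k _ => Finset.sum_congr rfl fun i _ => ?_
    have hGam : Gam Ψ G j k i w = ∑ q, G w j q * wd (gm Ψ i q) k w := rfl
    rw [hGam]; ring
  rw [h3]; ring

theorem goal2 {c : ℝ} (hΩ : IsOpen Ω) (hΨ : ContDiffOn ℝ (⊤ : ℕ∞) (fun u => (Ψ u : ℂ)) Ω)
    (hGsm : ∀ i j, ContDiffOn ℝ (⊤ : ℕ∞) (fun w => G w i j) Ω) (hw : w ∈ Ω)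
    (hG : ∀ w ∈ Ω, ∀ i k, ∑ j, gm Ψ i j w * G w k j = if i = k then 1 else 0)
    (hG' : ∀ w ∈ Ω, ∀ i k, ∑ j, G w i j * gm Ψ k j w = if i = k then 1 else 0)
    (hconst : ∀ w ∈ Ω, ∑ i, Psil Ψ i w * Psiu Ψ G i w = (c : ℂ))
    (j : Fin m) :
    ∑ k, (starRingEnd ℂ) (Psiu Ψ G k w) * wdc (Psiu Ψ G j) k w = - Psiu Ψ G j w := by
  have h1 : ∑ k, (starRingEnd ℂ) (Psiu Ψ G k w) * wdc (Psiu Ψ G j) k w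
      = (∑ k, (starRingEnd ℂ) (Psiu Ψ G k w)
            * (∑ l, (starRingEnd ℂ) (wd (Psil Ψ l) k w) * G w j l))
        - ∑ k, (starRingEnd ℂ) (Psiu Ψ G k w)
            * (∑ p, (∑ q, G w j q * (starRingEnd ℂ) (wd (gm Ψ q p) k w)) * Psiu Ψ G p w) := by
    rw [← Finset.sum_sub_distrib]
    refine Finset.sum_congr rfl fun k _ => ?_
    rw [dcPsiu hΩ hΨ hGsm hw hG hG' j k, mul_sub]
  rw [h1]
  -- first part
  have h2 : ∑ k, (starRingEnd ℂ) (Psiu Ψ G k w)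
        * (∑ l, (starRingEnd ℂ) (wd (Psil Ψ l) k w) * G w j l)
      = ∑ l, (starRingEnd ℂ) (∑ k, wd (Psil Ψ k) l w * Psiu Ψ G k w) * G w j l := by
    calc ∑ k, (starRingEnd ℂ) (Psiu Ψ G k w)
          * (∑ l, (starRingEnd ℂ) (wd (Psil Ψ l) k w) * G w j l)
        = ∑ k, ∑ l, (starRingEnd ℂ) (wd (Psil Ψ k) l w * Psiu Ψ G k w) * G w j l := by
          refine Finset.sum_congr rfl fun k _ => ?_
          rw [Finset.mul_sum]
          refine Finset.sum_congr rfl fun l _ => ?_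
          rw [Psil_symm hΩ hΨ hw l k, _root_.map_mul]
          ring
      _ = ∑ l, ∑ k, (starRingEnd ℂ) (wd (Psil Ψ k) l w * Psiu Ψ G k w) * G w j l :=
          Finset.sum_comm
      _ = ∑ l, (starRingEnd ℂ) (∑ k, wd (Psil Ψ k) l w * Psiu Ψ G k w) * G w j l := by
          refine Finset.sum_congr rfl fun l _ => ?_
          rw [map_sum, Finset.sum_mul]
  rw [h2]
  have h4 : ∀ l : Fin m, (starRingEnd ℂ) (∑ k, wd (Psil Ψ k) l w * Psiu Ψ G k w)
      = -(starRingEnd ℂ) (Psil Ψ l w)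
        + ∑ p, (∑ q, Psiu Ψ G q w * (starRingEnd ℂ) (wd (gm Ψ p q) l w))
            * (starRingEnd ℂ) (Psiu Ψ G p w) := by
    intro l
    rw [const_identity hΩ hΨ hGsm hw hG hG' hconst l, map_add, map_neg, map_sum]
    congr 1
    refine Finset.sum_congr rfl fun p _ => ?_
    rw [_root_.map_mul, map_sum]
    congr 1
    refine Finset.sum_congr rfl fun q _ => ?_
    rw [_root_.map_mul, RingHomCompTriple.comp_apply, RingHom.id_apply]
  have h5 : ∑ l, (starRingEnd ℂ) (∑ k, wd (Psil Ψ k) l w * Psiu Ψ G k w) * G w j l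
      = -Psiu Ψ G j w
        + ∑ l, (∑ p, (∑ q, Psiu Ψ G q w * (starRingEnd ℂ) (wd (gm Ψ p q) l w))
            * (starRingEnd ℂ) (Psiu Ψ G p w)) * G w j l := by
    calc ∑ l, (starRingEnd ℂ) (∑ k, wd (Psil Ψ k) l w * Psiu Ψ G k w) * G w j l
        = ∑ l, (-((starRingEnd ℂ) (Psil Ψ l w) * G w j l)
            + (∑ p, (∑ q, Psiu Ψ G q w * (starRingEnd ℂ) (wd (gm Ψ p q) l w))
                * (starRingEnd ℂ) (Psiu Ψ G p w)) * G w j l) := by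
          refine Finset.sum_congr rfl fun l _ => ?_
          rw [h4 l]; ring
      _ = _ := by
          rw [Finset.sum_add_distrib, Finset.sum_neg_distrib]
          have hU : Psiu Ψ G j w = ∑ l, (starRingEnd ℂ) (Psil Ψ l w) * G w j l := rfl
          rw [hU]
  rw [h5]
  -- remains: show the T1 term equals the subtracted S2 term
  have h6 : ∑ l, (∑ p, (∑ q, Psiu Ψ G q w * (starRingEnd ℂ) (wd (gm Ψ p q) l w))
          * (starRingEnd ℂ) (Psiu Ψ G p w)) * G w j l
      = ∑ k, (starRingEnd ℂ) (Psiu Ψ G k w)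
          * (∑ p, (∑ q, G w j q * (starRingEnd ℂ) (wd (gm Ψ q p) k w)) * Psiu Ψ G p w) := by
    have hF : ∀ l p q : Fin m, (starRingEnd ℂ) (wd (gm Ψ q p) l w)
        = (starRingEnd ℂ) (wd (gm Ψ l p) q w) := by
      intro l p q
      rw [gm_third hΩ hΨ hw q p l]
    calc ∑ l, (∑ p, (∑ q, Psiu Ψ G q w * (starRingEnd ℂ) (wd (gm Ψ p q) l w))
            * (starRingEnd ℂ) (Psiu Ψ G p w)) * G w j l
        = ∑ l, ∑ p, ∑ q, Psiu Ψ G q w * (starRingEnd ℂ) (wd (gm Ψ p q) l w)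
            * (starRingEnd ℂ) (Psiu Ψ G p w) * G w j l := by
          refine Finset.sum_congr rfl fun l _ => ?_
          rw [Finset.sum_mul]
          refine Finset.sum_congr rfl fun p _ => ?_
          rw [Finset.sum_mul, Finset.sum_mul]
      _ = ∑ k, ∑ p, ∑ q, (starRingEnd ℂ) (Psiu Ψ G k w)
            * (G w j q * (starRingEnd ℂ) (wd (gm Ψ q p) k w) * Psiu Ψ G p w) := by
          rw [Finset.sum_comm]
          refine Finset.sum_congr rfl fun a _ => ?_
          rw [Finset.sum_comm]
          refine Finset.sum_congr rfl fun b _ => Finset.sum_congr rfl fun d _ => ?_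
          rw [gm_third hΩ hΨ hw d b a]
          ring
      _ = ∑ k, (starRingEnd ℂ) (Psiu Ψ G k w)
            * (∑ p, (∑ q, G w j q * (starRingEnd ℂ) (wd (gm Ψ q p) k w)) * Psiu Ψ G p w) := by
          refine Finset.sum_congr rfl fun k _ => ?_
          rw [Finset.mul_sum]
          refine Finset.sum_congr rfl fun p _ => ?_
          rw [Finset.sum_mul, Finset.mul_sum]
  rw [h6]; ring

end main
end KA

/-- with Ψ a Kähler potential of constant differential norm and
V = grad Ψ = Ψ^k ∂_k, one has ∇_V V = V and ∇_{V̄} V = −V (componentwise), hence the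
integral submanifolds of span{V,V̄} are totally geodesic. -/
theorem gradient_field_geodesic {m : ℕ} (Ω : Set (Fin m → ℂ)) (hΩ : IsOpen Ω)
    (Ψ : (Fin m → ℂ) → ℝ) (G : (Fin m → ℂ) → Matrix (Fin m) (Fin m) ℂ) (c : ℝ)
    (hΨ : ContDiffOn ℝ (⊤ : ℕ∞) (fun u => (Ψ u : ℂ)) Ω)
    (hGsm : ∀ i j, ContDiffOn ℝ (⊤ : ℕ∞) (fun w => G w i j) Ω)
    (hG : ∀ w ∈ Ω, ∀ i k, ∑ j, gm Ψ i j w * G w k j = if i = k then 1 else 0)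
    (hG' : ∀ w ∈ Ω, ∀ i k, ∑ j, G w i j * gm Ψ k j w = if i = k then 1 else 0)
    (hconst : ∀ w ∈ Ω, ∑ i, Psil Ψ i w * Psiu Ψ G i w = (c : ℂ)) :
    (∀ w ∈ Ω, ∀ j,
      (∑ k, Psiu Ψ G k w * wd (Psiu Ψ G j) k w)
        + ∑ k, ∑ i, Psiu Ψ G k w * Gam Ψ G j k i w * Psiu Ψ G i w = Psiu Ψ G j w) ∧
    (∀ w ∈ Ω, ∀ j,
      ∑ k, (starRingEnd ℂ) (Psiu Ψ G k w) * wdc (Psiu Ψ G j) k w = - Psiu Ψ G j w) := by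
  constructor
  · intro w hw j
    exact KA.goal1 hΩ hΨ hGsm hw hG hG' j
  · intro w hw j
    exact KA.goal2 hΩ hΨ hGsm hw hG hG' hconst j
end
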